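/- arXiv:2007.07960 — 7 statements merged into one kernel-verified Lean document; each statement's English description precedes it below -/
import Mathlib

section
/- Let s ≥ 1 and let m₁, m₂, n₁, n₂, M, N be real parameters with 0 < N < 1, M > N + s, n₁ > 1 + √3, n₂ > 1, m₁ > √2, and m₂ > max{ n₂, ((m₁n₁ + M m₁² n₁ + n₁²)/m₁²)^{1/(1-N)}, ((n₁/(2m₁))(1+√5))^{1/(M-N-s)} }. Set m* = m₁ m₂^M and n* = n₁ n₂^N. Let K > 0, let T ∈ (0, ∞], let A : [0,T) → ℝ be continuous with −(t+1)^s ≤ A(t) ≤ K for all t ∈ [0,T), and let d, ρ : [0,T) → ℝ be differentiable solutions of d' = −d²/2 + A(t)ρ² − ρ + 1 and ρ' = −ρ d on [0,T). If ρ(0) > 0, d(0) > 0, and d(0) > m* ρ(0) − n*, then there exists a constant C > 0, independent of T, such that 0 < ρ(t) ≤ C and 0 < d(t) ≤ C for all t ∈ [0,T). -/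
/-!
`ρ' = -ρ d` is linear in `ρ`, so `ρ` stays positive. The heart of the argument is that the
region `{d > 0, d > m(t) ρ - n(t)}`, with `m(t) = m₁ (t + m₂)^M` and `n(t) = n₁ (t + n₂)^N`
(`shiftedPow`), is invariant. On the face `d = 0` the second inequality forces `ρ ≤ n / m`,
small enough that `d' ≥ -(t + 1)^s ρ² - ρ + 1 > 0`. On the face `d = m ρ - n` the derivative of
`d - m ρ + n` is, after `A ≥ -(t + 1)^s`, a quadratic in `ρ` which is increasing for `ρ ≥ n / m`
and positive at `ρ = n / m`; the lower bounds on `m₂` are what make both facts hold for all `t`.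
Then `ρ' ≤ 0` gives `ρ ≤ ρ(0)`, and `A ≤ K` forces `d' < 0` as soon as
`d² > 2 (K ρ(0)² + 1)`, which bounds `d`.
-/

open Real Set Filter Topology

lemma exists_first_zero {f : ℝ → ℝ} {a b : ℝ} (hab : a ≤ b) (hf : ContinuousOn f (Icc a b))
    (ha : 0 < f a) (hb : f b ≤ 0) :
    ∃ x ∈ Ioc a b, f x = 0 ∧ ∀ y ∈ Ico a x, 0 < f y := by
  set Z := Icc a b ∩ f ⁻¹' Iic 0
  have hZ : sInf Z ∈ Z := (hf.preimage_isClosed_of_isClosed isClosed_Icc isClosed_Iic).csInf_mem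
    ⟨b, ⟨hab, le_rfl⟩, hb⟩ ⟨a, fun y hy => hy.1.1⟩
  obtain ⟨⟨hax, hxb⟩, hx⟩ := hZ
  have hpos : ∀ y ∈ Ico a (sInf Z), 0 < f y := fun y hy => by
    by_contra! hy'
    exact hy.2.not_ge (csInf_le ⟨a, fun z hz => hz.1.1⟩ ⟨⟨hy.1, hy.2.le.trans hxb⟩, hy'⟩)
  have hax : a < sInf Z := hax.lt_of_ne fun h => by
    simp only [← h, mem_preimage, mem_Iic] at hx; linarith
  obtain ⟨z, hz, hfz⟩ := intermediate_value_Icc' hax.le (hf.mono (Icc_subset_Icc le_rfl hxb))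
    ⟨hx, ha.le⟩
  have hzx : z = sInf Z := by_contra fun h => (hpos z ⟨hz.1, hz.2.lt_of_ne h⟩).ne' hfz
  exact ⟨sInf Z, ⟨hax, hxb⟩, hzx ▸ hfz, hpos⟩

lemma HasDerivAt.nonpos_of_first_zero {f : ℝ → ℝ} {f' a x : ℝ} (hf : HasDerivAt f f' x)
    (hax : a < x) (hx : f x = 0) (hpos : ∀ y ∈ Ico a x, 0 < f y) : f' ≤ 0 := by
  by_contra! h
  have hslope : ∀ᶠ y in 𝓝[<] x, 0 < slope f x y :=
    (hasDerivAt_iff_tendsto_slope.1 hf).mono_left (nhdsWithin_mono _ fun y hy => ne_of_lt hy)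
      |>.eventually (eventually_gt_nhds h)
  obtain ⟨y, hy, hyx⟩ := (hslope.and (Ioo_mem_nhdsLT hax)).exists
  exact (neg_of_slope_pos hyx.2 hy hx).not_gt (hpos y ⟨hyx.1.le, hyx.2⟩)

theorem pos_and_pos_of_deriv_pos_at_zero {u v u' v' : ℝ → ℝ} {a b : ℝ}
    (hu : ∀ x ∈ Icc a b, HasDerivAt u (u' x) x) (hv : ∀ x ∈ Icc a b, HasDerivAt v (v' x) x)
    (hua : 0 < u a) (hva : 0 < v a)
    (hu' : ∀ x ∈ Ioc a b, u x = 0 → 0 ≤ v x → 0 < u' x)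
    (hv' : ∀ x ∈ Ioc a b, v x = 0 → 0 ≤ u x → 0 < v' x) :
    ∀ x ∈ Icc a b, 0 < u x ∧ 0 < v x := by
  intro c hc
  by_contra! hneg
  have hsub : Icc a c ⊆ Icc a b := Icc_subset_Icc le_rfl hc.2
  have hcont : ContinuousOn (fun x => min (u x) (v x)) (Icc a c) :=
    ContinuousOn.inf (fun x hx => (hu x (hsub hx)).continuousAt.continuousWithinAt)
      (fun x hx => (hv x (hsub hx)).continuousAt.continuousWithinAt)
  obtain ⟨x, hx, hx0, hpos⟩ := exists_first_zero hc.1 hcont (lt_min hua hva)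
    (min_le_iff.2 (by by_cases h : 0 < u c <;> [exact .inr (hneg h); exact .inl (not_lt.1 h)]))
  have hxb : x ∈ Ioc a b := ⟨hx.1, hx.2.trans hc.2⟩
  have hux : 0 ≤ u x := hx0 ▸ min_le_left _ _
  have hvx : 0 ≤ v x := hx0 ▸ min_le_right _ _
  rcases min_eq_iff.1 hx0 with ⟨hu0, -⟩ | ⟨hv0, -⟩
  · exact ((hu x (Ioc_subset_Icc_self hxb)).nonpos_of_first_zero hx.1 hu0
      fun y hy => (lt_min_iff.1 (hpos y hy)).1).not_gt (hu' x hxb hu0 hvx)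
  · exact ((hv x (Ioc_subset_Icc_self hxb)).nonpos_of_first_zero hx.1 hv0
      fun y hy => (lt_min_iff.1 (hpos y hy)).2).not_gt (hv' x hxb hv0 hux)

theorem pos_of_hasDerivAt_mul {f g : ℝ → ℝ} {a b : ℝ} (hg : ContinuousOn g (Icc a b))
    (hf : ∀ x ∈ Icc a b, HasDerivAt f (g x * f x) x) (ha : 0 < f a) :
    ∀ x ∈ Icc a b, 0 < f x := by
  obtain ⟨L, hL⟩ := isCompact_Icc.exists_bound_of_continuousOn hg
  -- `f` stays above the solution of `B' = -(L + 1) B` started at `f a / 2`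
  set B : ℝ → ℝ := fun x => f a / 2 * exp (-(L + 1) * (x - a))
  have hB_pos : ∀ x, 0 < B x := fun x => by positivity
  have hB : ∀ x, HasDerivAt B (-(L + 1) * B x) x := fun x =>
    ((((hasDerivAt_id' x).sub_const a).const_mul (-(L + 1))).exp.const_mul (f a / 2)).congr_deriv
      (by simp only [B]; ring)
  have hle := image_le_of_deriv_right_lt_deriv_boundary (f := fun x => -f x) (B := fun x => -B x)
    (fun x hx => (hf x hx).continuousAt.neg.continuousWithinAt)
    (fun x hx => (hf x (Ico_subset_Icc_self hx)).neg.hasDerivWithinAt)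
    (by simp only [B, sub_self, mul_zero, exp_zero]; linarith) (fun x => (hB x).neg)
    (fun x hx hfx => by
      have hfx : f x = B x := neg_inj.1 hfx
      have hgx : -g x ≤ L := (neg_le_abs _).trans (hL x (Ico_subset_Icc_self hx))
      rw [hfx]
      nlinarith [mul_le_mul_of_nonneg_right hgx (hB_pos x).le, hB_pos x])
  exact fun x hx => (hB_pos x).trans_le (neg_le_neg_iff.1 (hle hx))

lemma sq_add_lt_one_of_mul_one_add_sqrt_five_lt {x : ℝ} (hx : 0 ≤ x) (h : x * (1 + √5) < 2) :
    x ^ 2 + x < 1 := by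
  have h5 : √5 ^ 2 = 5 := sq_sqrt (by norm_num)
  nlinarith [sqrt_nonneg 5]

noncomputable def shiftedPow (c a e t : ℝ) : ℝ := c * (t + a) ^ e

lemma hasDerivAt_shiftedPow (c a e : ℝ) {t : ℝ} (ht : 0 < t + a) :
    HasDerivAt (shiftedPow c a e) (e * shiftedPow c a e t / (t + a)) t := by
  have := ((hasDerivAt_rpow_const (p := e) (.inl ht.ne')).comp t
    ((hasDerivAt_id' t).add_const a)).const_mul c
  refine this.congr_deriv ?_
  simp only [shiftedPow, rpow_sub_one ht.ne']
  ring

lemma barrier_quadratic_pos {A w m m' n n' ρ : ℝ} (hA : -w ≤ A) (hm : 0 < m) (hn : 0 < n)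
    (hm' : 0 ≤ m') (hn' : 0 ≤ n') (hρ : n ≤ ρ * m)
    (hvertex : (1 + m') * m ≤ (m ^ 2 - 2 * w) * n)
    (hvalue : w * n ^ 2 + (1 + m') * n * m < m ^ 2) :
    0 < ((m * ρ) ^ 2 - n ^ 2) / 2 + A * ρ ^ 2 - (1 + m') * ρ + 1 + n' := by
  obtain ⟨r, rfl⟩ : ∃ r, n = r * m := ⟨n / m, (div_mul_cancel₀ n hm.ne').symm⟩
  have hr : 0 < r := pos_of_mul_pos_left hn hm.le
  have hrρ : r ≤ ρ := le_of_mul_le_mul_right hρ hm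
  have ha : 0 < m ^ 2 - 2 * w := by nlinarith
  have hvertex' : 1 + m' ≤ (m ^ 2 - 2 * w) * r := by nlinarith
  have hvalue' : w * r ^ 2 + (1 + m') * r < 1 := by nlinarith
  -- the quadratic in `ρ` is increasing to the right of `r`, where it is positive
  have hincr : 0 ≤ (ρ - r) * ((m ^ 2 - 2 * w) * (ρ + r) / 2 - (1 + m')) := by
    apply mul_nonneg <;> nlinarith
  nlinarith [mul_le_mul_of_nonneg_right hA (sq_nonneg ρ)]

lemma barrier_vertex_le {m₁ n₁ M P p w n : ℝ} (hm₁ : 0 < m₁) (hn₁ : 0 < n₁)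
    (hnum : m₁ + m₁ ^ 2 + 2 * n₁ ≤ n₁ ^ 2 * m₁ ^ 2) (hP : 0 < P) (hMP : M * n₁ ≤ P)
    (hp : n₁ ≤ p) (hw : n₁ * w ≤ p ^ 2) (hn : n₁ ≤ n) :
    (1 + M * (m₁ * p) / P) * (m₁ * p) ≤ ((m₁ * p) ^ 2 - 2 * w) * n := by
  have hp0 : 0 < p := hn₁.trans_le hp
  have hX : n₁ * (M * (m₁ * p) / P) ≤ m₁ * p := by
    rw [mul_div_assoc', div_le_iff₀ hP]; nlinarith [mul_pos hm₁ hp0]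
  have ha : 2 * p ^ 2 ≤ n₁ * (m₁ * p) ^ 2 := by nlinarith [sq_nonneg p]
  refine le_of_mul_le_mul_left ?_ hn₁
  calc n₁ * ((1 + M * (m₁ * p) / P) * (m₁ * p))
      ≤ (m₁ + m₁ ^ 2) * p ^ 2 := by
          nlinarith [mul_le_mul_of_nonneg_right hX (mul_pos hm₁ hp0).le,
            mul_le_mul_of_nonneg_left hp (mul_pos hm₁ hp0).le]
    _ ≤ n₁ * (((m₁ * p) ^ 2 - 2 * w) * n₁) := by nlinarith [sq_nonneg p]
    _ ≤ n₁ * (((m₁ * p) ^ 2 - 2 * w) * n) := by gcongr; nlinarith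

lemma barrier_value_lt {m₁ n₁ M P p θ w n : ℝ} (hm₁ : 0 < m₁) (hn₁ : 0 < n₁) (hM : 0 ≤ M)
    (hP : 0 < P) (hPp : P ≤ p) (hθ : (m₁ * n₁ + M * m₁ ^ 2 * n₁ + n₁ ^ 2) / m₁ ^ 2 * θ < 1)
    (hw : w * n ^ 2 ≤ n₁ ^ 2 * θ * p ^ 2) (hn : n ≤ n₁ * θ * P) (hn0 : 0 ≤ n) :
    w * n ^ 2 + (1 + M * (m₁ * p) / P) * n * (m₁ * p) < (m₁ * p) ^ 2 := by
  have hp0 : 0 < p := hP.trans_le hPp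
  have hθ0 : 0 ≤ θ := by nlinarith [mul_pos hn₁ hP]
  rw [div_mul_eq_mul_div, div_lt_one (by positivity)] at hθ
  have hmid :
      (1 + M * (m₁ * p) / P) * n * (m₁ * p) ≤ (m₁ * n₁ + M * m₁ ^ 2 * n₁) * θ * p ^ 2 := by
    have hMn : M * (m₁ * p) / P * n ≤ M * m₁ * n₁ * θ * p := by
      rw [div_mul_eq_mul_div, div_le_iff₀ hP]; nlinarith [mul_nonneg hM (mul_pos hm₁ hp0).le]
    calc (1 + M * (m₁ * p) / P) * n * (m₁ * p)
        = n * (m₁ * p) + M * (m₁ * p) / P * n * (m₁ * p) := by ring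
      _ ≤ n₁ * θ * P * (m₁ * p) + M * m₁ * n₁ * θ * p * (m₁ * p) := by gcongr
      _ ≤ n₁ * θ * p * (m₁ * p) + M * m₁ * n₁ * θ * p * (m₁ * p) := by gcongr
      _ = (m₁ * n₁ + M * m₁ ^ 2 * n₁) * θ * p ^ 2 := by ring
  nlinarith [mul_lt_mul_of_pos_right hθ (pow_pos hp0 2)]

structure BarrierParams (s m₁ m₂ n₁ n₂ M N : ℝ) : Prop where
  one_le_s : 1 ≤ s
  N_pos : 0 < N
  N_lt_one : N < 1
  add_lt_M : N + s < M
  one_add_sqrt_three_lt : 1 + √3 < n₁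
  one_lt_n₂ : 1 < n₂
  sqrt_two_lt : √2 < m₁
  n₂_lt_m₂ : n₂ < m₂
  coeff_lt : (m₁ * n₁ + M * m₁ ^ 2 * n₁ + n₁ ^ 2) / m₁ ^ 2 < m₂ ^ (1 - N)
  golden_lt : n₁ / (2 * m₁) * (1 + √5) < m₂ ^ (M - N - s)

namespace BarrierParams

variable {s m₁ m₂ n₁ n₂ M N : ℝ}

lemma one_lt_m₁ (h : BarrierParams s m₁ m₂ n₁ n₂ M N) : 1 < m₁ :=
  one_lt_sqrt_two.trans h.sqrt_two_lt

lemma one_lt_n₁ (h : BarrierParams s m₁ m₂ n₁ n₂ M N) : 1 < n₁ := by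
  linarith [sqrt_nonneg 3, h.one_add_sqrt_three_lt]

lemma one_lt_m₂ (h : BarrierParams s m₁ m₂ n₁ n₂ M N) : 1 < m₂ :=
  h.one_lt_n₂.trans h.n₂_lt_m₂

lemma one_lt_M (h : BarrierParams s m₁ m₂ n₁ n₂ M N) : 1 < M := by
  linarith [h.N_pos, h.one_le_s, h.add_lt_M]

/-- On the face `d = 0` of the invariant region this makes `d' > 0`. -/
lemma weight_mul_sq_add_lt_one (h : BarrierParams s m₁ m₂ n₁ n₂ M N) {t ρ : ℝ} (ht : 0 ≤ t)
    (hρ : 0 ≤ ρ) (hρm : ρ * shiftedPow m₁ m₂ M t ≤ shiftedPow n₁ n₂ N t) :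
    (t + 1) ^ s * ρ ^ 2 + ρ < 1 := by
  have hm₁ := h.one_lt_m₁
  have hn₁ := h.one_lt_n₁
  have hm₂ := h.one_lt_m₂
  simp only [shiftedPow] at hρm
  obtain ⟨hs, hN, -, hM, -, hn₂, -, hn₂m₂, -, hgolden⟩ := h
  set P := t + m₂
  have hP : 1 ≤ P := by linarith
  have hPs : 1 ≤ P ^ s := one_le_rpow hP (by linarith)
  have hw : (t + 1) ^ s ≤ P ^ s := rpow_le_rpow (by linarith) (by linarith) (by linarith)
  have hQ : (t + n₂) ^ N ≤ P ^ N := rpow_le_rpow (by linarith) (by linarith) hN.le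
  have hPN : 0 < P ^ N := by positivity
  have hsplit : P ^ M = P ^ (M - N - s) * P ^ N * P ^ s := by
    rw [← rpow_add (by linarith), ← rpow_add (by linarith)]; ring_nf
  have hm₂P : m₂ ^ (M - N - s) ≤ P ^ (M - N - s) :=
    rpow_le_rpow (by linarith) (by linarith) (by linarith)
  set y := ρ * P ^ s
  have hy : y * (m₁ * m₂ ^ (M - N - s)) ≤ n₁ := by
    have : y * (m₁ * m₂ ^ (M - N - s)) * P ^ N ≤ n₁ * P ^ N := calc
      _ = ρ * m₁ * P ^ N * P ^ s * m₂ ^ (M - N - s) := by ring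
      _ ≤ ρ * m₁ * P ^ N * P ^ s * P ^ (M - N - s) := by gcongr
      _ = ρ * (m₁ * P ^ M) := by rw [hsplit]; ring
      _ ≤ n₁ * (t + n₂) ^ N := hρm
      _ ≤ n₁ * P ^ N := by gcongr
    exact le_of_mul_le_mul_right this hPN
  have hμ : 0 < m₁ * m₂ ^ (M - N - s) := by positivity
  have hy' : y * (1 + √5) < 2 := by
    refine lt_of_mul_lt_mul_right ?_ hμ.le
    calc y * (1 + √5) * (m₁ * m₂ ^ (M - N - s)) ≤ n₁ * (1 + √5) := by
          rw [mul_right_comm]; gcongr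
      _ = 2 * m₁ * (n₁ / (2 * m₁) * (1 + √5)) := by field_simp
      _ < 2 * m₁ * m₂ ^ (M - N - s) := by gcongr
      _ = 2 * (m₁ * m₂ ^ (M - N - s)) := by ring
  have := sq_add_lt_one_of_mul_one_add_sqrt_five_lt (by positivity) hy'
  nlinarith [mul_le_mul_of_nonneg_right hw (sq_nonneg ρ)]

lemma num_le (h : BarrierParams s m₁ m₂ n₁ n₂ M N) :
    m₁ + m₁ ^ 2 + 2 * n₁ ≤ n₁ ^ 2 * m₁ ^ 2 := by
  have hm₁ := h.one_lt_m₁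
  have hn₁ : 2 * n₁ + 2 < n₁ ^ 2 := by
    nlinarith [h.one_add_sqrt_three_lt, sq_sqrt (show (0 : ℝ) ≤ 3 by norm_num), sqrt_nonneg 3]
  have hm₁' : 1 < m₁ ^ 2 := by nlinarith
  nlinarith [mul_lt_mul_of_pos_right hn₁ (by positivity : (0 : ℝ) < m₁ ^ 2),
    mul_pos (sub_pos.2 hm₁') (zero_lt_one.trans h.one_lt_n₁),
    mul_pos (zero_lt_one.trans hm₁) (sub_pos.2 hm₁)]

lemma coeff_mul_rpow_lt (h : BarrierParams s m₁ m₂ n₁ n₂ M N) {P : ℝ} (hP : m₂ ≤ P) :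
    (m₁ * n₁ + M * m₁ ^ 2 * n₁ + n₁ ^ 2) / m₁ ^ 2 * P ^ (N - 1) < 1 := by
  have hm₂ : 0 < m₂ := zero_lt_one.trans h.one_lt_m₂
  have hκ : 0 ≤ (m₁ * n₁ + M * m₁ ^ 2 * n₁ + n₁ ^ 2) / m₁ ^ 2 := by
    have := h.one_lt_m₁; have := h.one_lt_n₁; have := h.one_lt_M
    positivity
  calc (m₁ * n₁ + M * m₁ ^ 2 * n₁ + n₁ ^ 2) / m₁ ^ 2 * P ^ (N - 1)
      ≤ (m₁ * n₁ + M * m₁ ^ 2 * n₁ + n₁ ^ 2) / m₁ ^ 2 * m₂ ^ (N - 1) :=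
        mul_le_mul_of_nonneg_left (rpow_le_rpow_of_nonpos hm₂ hP (by linarith [h.N_lt_one])) hκ
    _ < m₂ ^ (1 - N) * m₂ ^ (N - 1) :=
        mul_lt_mul_of_pos_right h.coeff_lt (rpow_pos_of_pos hm₂ _)
    _ = 1 := by rw [← rpow_add hm₂]; simp

lemma mul_lt_m₂ (h : BarrierParams s m₁ m₂ n₁ n₂ M N) : M * n₁ < m₂ := by
  have hm₁ : 0 < m₁ := zero_lt_one.trans h.one_lt_m₁
  have hn₁ : 0 < n₁ := zero_lt_one.trans h.one_lt_n₁
  have hm₂ : 1 < m₂ := h.one_lt_m₂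
  calc M * n₁ ≤ (m₁ * n₁ + M * m₁ ^ 2 * n₁ + n₁ ^ 2) / m₁ ^ 2 := by
        rw [le_div_iff₀ (by positivity)]; nlinarith [mul_pos hm₁ hn₁]
    _ < m₂ ^ (1 - N) := h.coeff_lt
    _ ≤ m₂ := by
        conv_rhs => rw [← rpow_one m₂]
        exact rpow_le_rpow_of_exponent_le hm₂.le (by linarith [h.N_pos])

/-- The left side is the derivative of `d - m ρ + n` on the face `d = m ρ - n`. -/
lemma barrier_deriv_pos (h : BarrierParams s m₁ m₂ n₁ n₂ M N) {t ρ A : ℝ} (ht : 0 ≤ t)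
    (hA : -(t + 1) ^ s ≤ A) (hρ : shiftedPow n₁ n₂ N t ≤ ρ * shiftedPow m₁ m₂ M t) :
    0 < ((shiftedPow m₁ m₂ M t * ρ) ^ 2 - shiftedPow n₁ n₂ N t ^ 2) / 2 + A * ρ ^ 2
      - (1 + M * shiftedPow m₁ m₂ M t / (t + m₂)) * ρ + 1
      + N * shiftedPow n₁ n₂ N t / (t + n₂) := by
  have hm₁ : 0 < m₁ := zero_lt_one.trans h.one_lt_m₁
  have hn₁ : 0 < n₁ := zero_lt_one.trans h.one_lt_n₁
  have hM := h.one_lt_M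
  have hMn₁ := h.mul_lt_m₂
  have hm₂ := h.one_lt_m₂
  have hn₂ := h.one_lt_n₂
  have hθ := h.coeff_mul_rpow_lt (P := t + m₂) (by linarith)
  have hnum := h.num_le
  obtain ⟨hs, hN, -, hNsM, -, -, -, hn₂m₂, -, -⟩ := h
  simp only [shiftedPow] at hρ ⊢
  set P := t + m₂
  set Q := t + n₂
  have hP : 1 < P := by linarith
  have hP0 : 0 < P := by linarith
  have hQ : 1 ≤ Q := by linarith
  have hPp : P ≤ P ^ M := by
    conv_lhs => rw [← rpow_one P]
    exact rpow_le_rpow_of_exponent_le hP.le hM.le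
  have hw : (t + 1) ^ s ≤ P ^ s := rpow_le_rpow (by linarith) (by linarith) (by linarith)
  have hQN : 1 ≤ Q ^ N := one_le_rpow hQ hN.le
  have hn : n₁ * Q ^ N ≤ n₁ * P ^ (N - 1) * P := by
    rw [mul_assoc, rpow_sub_one hP0.ne', div_mul_cancel₀ _ hP0.ne']
    exact mul_le_mul_of_nonneg_left (rpow_le_rpow (by linarith) (by linarith) hN.le) hn₁.le
  have hn₁P : n₁ ≤ P := by nlinarith
  have hexp : P ^ s * P ^ (N - 1) * P ^ 2 ≤ (P ^ M) ^ 2 := by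
    rw [← rpow_natCast, ← rpow_natCast (P ^ M), ← rpow_mul hP0.le, ← rpow_add hP0,
      ← rpow_add hP0]
    exact rpow_le_rpow_of_exponent_le hP.le (by push_cast; linarith)
  have hθP : 1 ≤ P ^ (N - 1) * P := by
    rw [rpow_sub_one hP0.ne', div_mul_cancel₀ _ hP0.ne']; exact one_le_rpow hP.le hN.le
  refine barrier_quadratic_pos hA (by positivity) (by positivity) (by positivity) (by positivity)
    hρ (barrier_vertex_le hm₁ hn₁ hnum hP0 (by linarith) (hn₁P.trans hPp) ?_ ?_)
    (barrier_value_lt hm₁ hn₁ (by linarith) hP0 hPp hθ ?_ hn (by positivity))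
  · calc n₁ * (t + 1) ^ s ≤ P * P ^ s := by gcongr
      _ ≤ P * P ^ s * (P ^ (N - 1) * P) := le_mul_of_one_le_right (by positivity) hθP
      _ = P ^ s * P ^ (N - 1) * P ^ 2 := by ring
      _ ≤ (P ^ M) ^ 2 := hexp
  · exact le_mul_of_one_le_right hn₁.le hQN
  · calc (t + 1) ^ s * (n₁ * Q ^ N) ^ 2 ≤ P ^ s * (n₁ * P ^ (N - 1) * P) ^ 2 := by gcongr
      _ = n₁ ^ 2 * P ^ (N - 1) * (P ^ s * P ^ (N - 1) * P ^ 2) := by ring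
      _ ≤ n₁ ^ 2 * P ^ (N - 1) * (P ^ M) ^ 2 := by gcongr

lemma of_lt_max (hs : 1 ≤ s) (hN0 : 0 < N) (hN1 : N < 1) (hM : M > N + s)
    (hn₁ : n₁ > 1 + √3) (hn₂ : n₂ > 1) (hm₁ : m₁ > √2)
    (hm₂ : m₂ > max (max n₂ (((m₁ * n₁ + M * m₁ ^ 2 * n₁ + n₁ ^ 2) / m₁ ^ 2) ^ (1 / (1 - N))))
        ((n₁ / (2 * m₁) * (1 + √5)) ^ (1 / (M - N - s)))) :
    BarrierParams s m₁ m₂ n₁ n₂ M N := by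
  obtain ⟨⟨hn₂m₂, hcoeff⟩, hgolden⟩ := (max_lt_iff.1 hm₂).imp_left max_lt_iff.1
  have hm₁0 : 0 ≤ m₁ := (sqrt_nonneg 2).trans hm₁.le
  have hn₁0 : 0 ≤ n₁ := by linarith [sqrt_nonneg 3]
  have hM0 : 0 ≤ M := by linarith
  have hm₂0 : 0 ≤ m₂ := by linarith
  rw [one_div] at hcoeff hgolden
  exact ⟨hs, hN0, hN1, hM, hn₁, hn₂, hm₁, hn₂m₂,
    (rpow_inv_lt_iff_of_pos (by positivity) hm₂0 (by linarith)).1 hcoeff,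
    (rpow_inv_lt_iff_of_pos (by positivity) hm₂0 (by linarith)).1 hgolden⟩

theorem barrier_invariant (h : BarrierParams s m₁ m₂ n₁ n₂ M N) {A d ρ : ℝ → ℝ} {b : ℝ}
    (hAlb : ∀ t ∈ Icc 0 b, -(t + 1) ^ s ≤ A t)
    (hd : ∀ t ∈ Icc 0 b, HasDerivAt d (-(d t) ^ 2 / 2 + A t * ρ t ^ 2 - ρ t + 1) t)
    (hρ : ∀ t ∈ Icc 0 b, HasDerivAt ρ (-(ρ t) * d t) t) (hρpos : ∀ t ∈ Icc 0 b, 0 < ρ t)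
    (hd0 : 0 < d 0) (hthr : shiftedPow m₁ m₂ M 0 * ρ 0 - shiftedPow n₁ n₂ N 0 < d 0) :
    ∀ t ∈ Icc 0 b, 0 < d t ∧ 0 < d t - shiftedPow m₁ m₂ M t * ρ t + shiftedPow n₁ n₂ N t := by
  have hm₂ := h.one_lt_m₂
  have hn₂ := h.one_lt_n₂
  have hE : ∀ t ∈ Icc 0 b,
      HasDerivAt (fun t => d t - shiftedPow m₁ m₂ M t * ρ t + shiftedPow n₁ n₂ N t)
        ((-(d t) ^ 2 / 2 + A t * ρ t ^ 2 - ρ t + 1)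
          - (M * shiftedPow m₁ m₂ M t / (t + m₂) * ρ t + shiftedPow m₁ m₂ M t * (-(ρ t) * d t))
          + N * shiftedPow n₁ n₂ N t / (t + n₂)) t := fun t ht =>
    ((hd t ht).sub ((hasDerivAt_shiftedPow m₁ m₂ M (by linarith [ht.1])).mul (hρ t ht))).add
      (hasDerivAt_shiftedPow n₁ n₂ N (by linarith [ht.1]))
  refine pos_and_pos_of_deriv_pos_at_zero hd hE hd0 (by linarith) ?_ ?_
  · intro t ht hdt hEt
    beta_reduce at hEt
    have hρt := hρpos t (Ioc_subset_Icc_self ht)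
    have := h.weight_mul_sq_add_lt_one ht.1.le hρt.le (by linarith)
    rw [hdt]
    nlinarith [mul_le_mul_of_nonneg_right (hAlb t (Ioc_subset_Icc_self ht)) (sq_nonneg (ρ t))]
  · intro t ht hEt hdt
    beta_reduce at hEt
    have hdt' : d t = shiftedPow m₁ m₂ M t * ρ t - shiftedPow n₁ n₂ N t := by linarith
    convert h.barrier_deriv_pos (ρ := ρ t) ht.1.le (hAlb t (Ioc_subset_Icc_self ht))
      (by linarith) using 1
    rw [hdt']
    ring

theorem bounds_on_Icc (h : BarrierParams s m₁ m₂ n₁ n₂ M N) {A d ρ : ℝ → ℝ} {K b : ℝ}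
    (hK : 0 ≤ K) (hAlb : ∀ t ∈ Icc 0 b, -(t + 1) ^ s ≤ A t) (hAub : ∀ t ∈ Icc 0 b, A t ≤ K)
    (hd : ∀ t ∈ Icc 0 b, HasDerivAt d (-(d t) ^ 2 / 2 + A t * ρ t ^ 2 - ρ t + 1) t)
    (hρ : ∀ t ∈ Icc 0 b, HasDerivAt ρ (-(ρ t) * d t) t) (hρ0 : 0 < ρ 0) (hd0 : 0 < d 0)
    (hthr : shiftedPow m₁ m₂ M 0 * ρ 0 - shiftedPow n₁ n₂ N 0 < d 0) :
    ∀ t ∈ Icc 0 b, (0 < ρ t ∧ ρ t ≤ ρ 0) ∧ (0 < d t ∧ d t ≤ d 0 + 2 * (K * ρ 0 ^ 2 + 1)) := by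
  have hdcont : ContinuousOn d (Icc 0 b) := fun t ht => (hd t ht).continuousAt.continuousWithinAt
  have hρpos : ∀ t ∈ Icc 0 b, 0 < ρ t :=
    pos_of_hasDerivAt_mul (g := fun t => -d t) hdcont.neg
      (fun t ht => (hρ t ht).congr_deriv (by ring)) hρ0
  have hdpos t ht := (h.barrier_invariant hAlb hd hρ hρpos hd0 hthr t ht).1
  have hρle : ∀ t ∈ Icc 0 b, ρ t ≤ ρ 0 :=
    image_le_of_deriv_right_le_deriv_boundary (B := fun _ => ρ 0) (B' := fun _ => 0)
      (fun t ht => (hρ t ht).continuousAt.continuousWithinAt)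
      (fun t ht => (hρ t (Ico_subset_Icc_self ht)).hasDerivWithinAt) le_rfl continuousOn_const
      (fun _ _ => hasDerivWithinAt_const _ _ _)
      (fun t ht => by
        nlinarith [hρpos t (Ico_subset_Icc_self ht), hdpos t (Ico_subset_Icc_self ht)])
  have hdle : ∀ t ∈ Icc 0 b, d t ≤ d 0 + 2 * (K * ρ 0 ^ 2 + 1) :=
    image_le_of_deriv_right_lt_deriv_boundary (B' := fun _ => 0) hdcont
      (fun t ht => (hd t (Ico_subset_Icc_self ht)).hasDerivWithinAt)
      (le_add_of_nonneg_right (by positivity))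
      (fun _ => hasDerivAt_const _ _)
      (fun t ht hdt => by
        have ht' := Ico_subset_Icc_self ht
        have hρt := hρpos t ht'
        have hKρ : A t * ρ t ^ 2 ≤ K * ρ 0 ^ 2 := calc
          _ ≤ K * ρ t ^ 2 := by gcongr; exact hAub t ht'
          _ ≤ K * ρ 0 ^ 2 := by gcongr; exact hρle t ht'
        have hc : 2 ≤ 2 * (K * ρ 0 ^ 2 + 1) := by nlinarith [sq_nonneg (ρ 0)]
        rw [hdt]
        nlinarith)
  exact fun t ht => ⟨⟨hρpos t ht, hρle t ht⟩, hdpos t ht, hdle t ht⟩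

end BarrierParams

theorem euler_poisson_global_bounds_poly_general
    (s m₁ m₂ n₁ n₂ M N : ℝ)
    (hs : 1 ≤ s)
    (hN0 : 0 < N) (hN1 : N < 1)
    (hM : M > N + s)
    (hn₁ : n₁ > 1 + Real.sqrt 3)
    (hn₂ : n₂ > 1)
    (hm₁ : m₁ > Real.sqrt 2)
    (hm₂ : m₂ > max (max n₂ (((m₁ * n₁ + M * m₁ ^ 2 * n₁ + n₁ ^ 2) / m₁ ^ 2) ^ (1 / (1 - N))))
        ((n₁ / (2 * m₁) * (1 + Real.sqrt 5)) ^ (1 / (M - N - s))))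
    (K : ℝ) (hK : 0 < K)
    (T : EReal)
    (A d ρ : ℝ → ℝ)
    (hAlb : ∀ t : ℝ, 0 ≤ t → (t : EReal) < T → -(t + 1) ^ s ≤ A t)
    (hAub : ∀ t : ℝ, 0 ≤ t → (t : EReal) < T → A t ≤ K)
    (hd : ∀ t : ℝ, 0 ≤ t → (t : EReal) < T →
      HasDerivAt d (-(d t) ^ 2 / 2 + A t * (ρ t) ^ 2 - ρ t + 1) t)
    (hρ : ∀ t : ℝ, 0 ≤ t → (t : EReal) < T →
      HasDerivAt ρ (-(ρ t) * d t) t)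
    (hρ0 : 0 < ρ 0) (hd0 : 0 < d 0)
    (hthr : d 0 > m₁ * m₂ ^ M * ρ 0 - n₁ * n₂ ^ N) :
    ∃ C : ℝ, 0 < C ∧ ∀ t : ℝ, 0 ≤ t → (t : EReal) < T →
      (0 < ρ t ∧ ρ t ≤ C) ∧ (0 < d t ∧ d t ≤ C) := by
  have hP := BarrierParams.of_lt_max hs hN0 hN1 hM hn₁ hn₂ hm₁ hm₂
  refine ⟨max (ρ 0) (d 0 + 2 * (K * ρ 0 ^ 2 + 1)), lt_max_of_lt_left hρ0, fun t ht htT => ?_⟩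
  have hIcc : ∀ y ∈ Icc 0 t, 0 ≤ y ∧ (y : EReal) < T := fun y hy =>
    ⟨hy.1, (EReal.coe_le_coe_iff.2 hy.2).trans_lt htT⟩
  obtain ⟨⟨hρpos, hρle⟩, hdpos, hdle⟩ := hP.bounds_on_Icc hK.le
    (fun y hy => hAlb y (hIcc y hy).1 (hIcc y hy).2)
    (fun y hy => hAub y (hIcc y hy).1 (hIcc y hy).2)
    (fun y hy => hd y (hIcc y hy).1 (hIcc y hy).2)
    (fun y hy => hρ y (hIcc y hy).1 (hIcc y hy).2)
    hρ0 hd0 (by simp only [shiftedPow, zero_add]; linarith) t ⟨ht, le_rfl⟩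
  exact ⟨⟨hρpos, hρle.trans (le_max_left _ _)⟩, hdpos, hdle.trans (le_max_right _ _)⟩

/-- Global a priori bounds on the characteristic system of the 2D attractive
Euler--Poisson flow under the polynomial lower-bound assumption
`A(t) ≥ -(t+1)^s`. -/
theorem euler_poisson_global_bounds_poly
    (s m₁ m₂ n₁ n₂ M N : ℝ)
    (hs : 1 ≤ s)
    (hN0 : 0 < N) (hN1 : N < 1)
    (hM : M > N + s)
    (hn₁ : n₁ > 1 + Real.sqrt 3)
    (hn₂ : n₂ > 1)
    (hm₁ : m₁ > Real.sqrt 2)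
    (hm₂ : m₂ > max (max n₂ (((m₁ * n₁ + M * m₁ ^ 2 * n₁ + n₁ ^ 2) / m₁ ^ 2) ^ (1 / (1 - N))))
        ((n₁ / (2 * m₁) * (1 + Real.sqrt 5)) ^ (1 / (M - N - s))))
    (K : ℝ) (hK : 0 < K)
    (T : EReal) (hT : 0 < T)
    (A d ρ : ℝ → ℝ)
    (hAcont : ContinuousOn A {t : ℝ | 0 ≤ t ∧ (t : EReal) < T})
    (hAlb : ∀ t : ℝ, 0 ≤ t → (t : EReal) < T → -(t + 1) ^ s ≤ A t)
    (hAub : ∀ t : ℝ, 0 ≤ t → (t : EReal) < T → A t ≤ K)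
    (hd : ∀ t : ℝ, 0 ≤ t → (t : EReal) < T →
      HasDerivAt d (-(d t) ^ 2 / 2 + A t * (ρ t) ^ 2 - ρ t + 1) t)
    (hρ : ∀ t : ℝ, 0 ≤ t → (t : EReal) < T →
      HasDerivAt ρ (-(ρ t) * d t) t)
    (hρ0 : 0 < ρ 0) (hd0 : 0 < d 0)
    (hthr : d 0 > m₁ * m₂ ^ M * ρ 0 - n₁ * n₂ ^ N) :
    ∃ C : ℝ, 0 < C ∧ ∀ t : ℝ, 0 ≤ t → (t : EReal) < T →
      (0 < ρ t ∧ ρ t ≤ C) ∧ (0 < d t ∧ d t ≤ C) :=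
  euler_poisson_global_bounds_poly_general s m₁ m₂ n₁ n₂ M N hs hN0 hN1 hM hn₁ hn₂ hm₁ hm₂ K hK T A
    d ρ hAlb hAub hd hρ hρ0 hd0 hthr
end

section
/- Let s ≥ 1 and let m₁ > 0, n₁ > 0, M, N be real with 0 < N < 1, M > (N + 1 + s)/2, 1 < n₂ < m₂, and m₂^{1−N} > (m₁ n₁ + M m₁² n₁ + n₁²)/m₁². Define n(x) = n₁ (x + n₂)^N and m(x) = m₁ (x + m₂)^M, so that n'(x) = n₁ N (x + n₂)^{N−1} and m'(x) = m₁ M (x + m₂)^{M−1}. Then for all x ≥ 0, (1 + n'(x)) m(x)² − (1 + m'(x)) m(x) n(x) − (x+1)^s n(x)² > 0. -/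
/-!
Put `p = x + m₂ ≥ q = x + n₂ ≥ r = x + 1`. Since `p` is the largest base and `p ≥ 1`, each of
the three negative terms `m n`, `m' m n` and `(x+1)^s n²` is at most a constant times
`p ^ (2M - 1 + N)`; this is where `2M > N + 1 + s` enters. The leading term
`m₁² p^(2M) = m₁² p^(2M - 1 + N) p^(1 - N)` dominates their sum because
`p^(1 - N) ≥ m₂^(1 - N)` exceeds the ratio of the constants.
-/

open Real

theorem rpow_mul_rpow_le_rpow {p q a b c : ℝ} (hp : 1 ≤ p) (hq : 0 ≤ q) (hqp : q ≤ p)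
    (hb : 0 ≤ b) (habc : a + b ≤ c) : p ^ a * q ^ b ≤ p ^ c :=
  calc p ^ a * q ^ b ≤ p ^ a * p ^ b := by gcongr
    _ = p ^ (a + b) := (rpow_add (by linarith) a b).symm
    _ ≤ p ^ c := rpow_le_rpow_of_exponent_le hp habc

theorem invariance_expr_pos {s m₁ n₁ M N p q r : ℝ} (hs : 0 ≤ s) (hm₁ : 0 ≤ m₁) (hn₁ : 0 ≤ n₁)
    (hN : 0 ≤ N) (hM1 : 1 ≤ M) (hM : N + 1 + s ≤ 2 * M)
    (hr : 0 ≤ r) (hrp : r ≤ p) (hq : 0 < q) (hqp : q ≤ p) (hp : 1 ≤ p)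
    (hdom : m₁ * n₁ + M * m₁ ^ 2 * n₁ + n₁ ^ 2 < m₁ ^ 2 * p ^ (1 - N)) :
    0 < (1 + n₁ * N * q ^ (N - 1)) * (m₁ * p ^ M) ^ 2
        - (1 + m₁ * M * p ^ (M - 1)) * (m₁ * p ^ M) * (n₁ * q ^ N)
        - r ^ s * (n₁ * q ^ N) ^ 2 := by
  have hp0 : 0 < p := by linarith
  set E := 2 * M - 1 + N with hE
  have hlead : (p ^ M) ^ 2 = p ^ E * p ^ (1 - N) := by
    rw [sq, ← rpow_add hp0, ← rpow_add hp0, hE]; ring_nf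
  have hmix : p ^ M * q ^ N ≤ p ^ E :=
    rpow_mul_rpow_le_rpow hp hq.le hqp hN (by linarith)
  have hderiv : p ^ (M - 1) * p ^ M * q ^ N ≤ p ^ E := by
    rw [← rpow_add hp0]
    exact rpow_mul_rpow_le_rpow hp hq.le hqp hN (by linarith)
  have hsq : r ^ s * (q ^ N) ^ 2 ≤ p ^ E :=
    calc r ^ s * (q ^ N) ^ 2 = r ^ s * q ^ (2 * N) := by rw [sq, ← rpow_add hq]; ring_nf
      _ ≤ p ^ s * q ^ (2 * N) := by gcongr
      _ ≤ p ^ E := rpow_mul_rpow_le_rpow hp hq.le hqp (by linarith) (by linarith)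
  have hnq : 0 ≤ n₁ * N * q ^ (N - 1) := by positivity
  have hM0 : 0 ≤ M := by linarith
  linear_combination p ^ E * hdom - m₁ ^ 2 * hlead + (m₁ * p ^ M) ^ 2 * hnq
    + (m₁ * n₁) * hmix + (M * m₁ ^ 2 * n₁) * hderiv + n₁ ^ 2 * hsq

/-- Lemma 4.1 of the paper: with `n(x) = n₁(x+n₂)^N` and `m(x) = m₁(x+m₂)^M`,
the invariance inequality
`(1 + n'(x)) m(x)² − (1 + m'(x)) m(x) n(x) − (x+1)^s n(x)² > 0` holds for all `x ≥ 0`. -/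
theorem invariance_inequality_poly
    (s m₁ m₂ n₁ n₂ M N : ℝ)
    (hs : 1 ≤ s)
    (hm₁ : 0 < m₁) (hn₁ : 0 < n₁)
    (hN0 : 0 < N) (hN1 : N < 1)
    (hM : M > (N + 1 + s) / 2)
    (hn₂ : 1 < n₂) (hn₂m₂ : n₂ < m₂)
    (hcond : m₂ ^ (1 - N) > (m₁ * n₁ + M * m₁ ^ 2 * n₁ + n₁ ^ 2) / m₁ ^ 2) :
    ∀ x : ℝ, 0 ≤ x →
      (1 + n₁ * N * (x + n₂) ^ (N - 1)) * (m₁ * (x + m₂) ^ M) ^ 2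
        - (1 + m₁ * M * (x + m₂) ^ (M - 1)) * (m₁ * (x + m₂) ^ M) * (n₁ * (x + n₂) ^ N)
        - (x + 1) ^ s * (n₁ * (x + n₂) ^ N) ^ 2 > 0 := by
  intro x hx
  have hdom : m₁ * n₁ + M * m₁ ^ 2 * n₁ + n₁ ^ 2 < m₁ ^ 2 * (x + m₂) ^ (1 - N) :=
    (div_lt_iff₀' (by positivity)).1 <|
      hcond.trans_le (rpow_le_rpow (by linarith) (by linarith) (by linarith))
  exact invariance_expr_pos (by linarith) hm₁.le hn₁.le hN0.le (by linarith) (by linarith)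
    (by linarith) (by linarith) (by linarith) (by linarith) (by linarith) hdom
end

section
/- Let s ≥ 1 and let m₁ > 0, n₁ > 0, M, N, n₂, m₂ be real with 0 < N < 1, 1 < n₂ < m₂, M > N + s, and m₂ > ((n₁/(2m₁))(1+√5))^{1/(M−N−s)}. Define a*(x) = (−1 + √(1 + 4(x+1)^s)) / (2(x+1)^s). Then for all x ≥ 0, a*(x) > n₁(x + n₂)^N / (m₁(x + m₂)^M). -/
/-!
Write `p = (x + 1)^s ≥ 1` and `y = x + m₂`. Since `√(1 + 4p) ≥ √5`, the root `a*(x)` is at least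
`(√5 - 1)/(2p) = 1/(φ p)`, with `φ` the golden ratio. On the other side `x + n₂ ≤ y`, so the intercept
is at most `n₁ / (m₁ y^(M - N)) = n₁ / (m₁ y^s y^(M - N - s))`, and `y^s ≥ p`, while the hypothesis on
`m₂` says exactly that `y^(M - N - s) > (n₁/m₁) φ`. Hence the intercept is below `1/(φ p)`.
-/

open Real goldenRatio

lemma inv_goldenRatio_mul_le_quadratic_root {p : ℝ} (hp : 1 ≤ p) :
    (φ * p)⁻¹ ≤ (-1 + √(1 + 4 * p)) / (2 * p) := by
  have hφ : (φ * p)⁻¹ = (-1 + √5) / (2 * p) := by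
    rw [mul_inv, inv_goldenRatio]
    field_simp
    ring
  rw [hφ]
  gcongr
  linarith

lemma rpow_div_rpow_le_inv_rpow_sub {a y N M : ℝ} (ha : 0 ≤ a) (hay : a ≤ y) (hy : 0 < y)
    (hN : 0 ≤ N) : a ^ N / y ^ M ≤ (y ^ (M - N))⁻¹ := by
  have hsplit : y ^ M = y ^ N * y ^ (M - N) := by
    rw [← rpow_add hy, add_sub_cancel]
  calc a ^ N / y ^ M ≤ y ^ N / y ^ M := by gcongr
    _ = (y ^ (M - N))⁻¹ := by
      rw [hsplit, div_mul_eq_div_div, div_self (rpow_pos_of_pos hy N).ne', one_div]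

theorem root_above_intercept_poly_general
    (s m₁ m₂ n₁ n₂ M N : ℝ)
    (hs : 1 ≤ s)
    (hm₁ : 0 < m₁) (hn₁ : 0 < n₁)
    (hN0 : 0 < N)
    (hn₂ : 1 < n₂) (hn₂m₂ : n₂ < m₂)
    (hM : M > N + s)
    (hm₂ : m₂ > (n₁ / (2 * m₁) * (1 + Real.sqrt 5)) ^ (1 / (M - N - s))) :
    ∀ x : ℝ, 0 ≤ x →
      (-1 + Real.sqrt (1 + 4 * (x + 1) ^ s)) / (2 * (x + 1) ^ s)
        > n₁ * (x + n₂) ^ N / (m₁ * (x + m₂) ^ M) := by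
  intro x hx
  set p := (x + 1) ^ s
  set y := x + m₂
  have hp : 1 ≤ p := one_le_rpow (by linarith) (by linarith)
  have hy : 0 < y := by linarith
  have hC : n₁ / m₁ * φ < y ^ (M - N - s) := by
    have hbase : n₁ / (2 * m₁) * (1 + √5) = n₁ / m₁ * φ := by
      simp only [goldenRatio]; ring
    rw [hbase, one_div] at hm₂
    exact (rpow_inv_lt_iff_of_pos (by positivity) hy.le (by linarith)).mp
      (hm₂.trans_le (le_add_of_nonneg_left hx))
  have hpy : p * (n₁ / m₁ * φ) < y ^ (M - N) := calc
    p * (n₁ / m₁ * φ) < y ^ s * y ^ (M - N - s) :=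
      mul_lt_mul' (rpow_le_rpow (by linarith) (by linarith) (by linarith)) hC
        (by positivity) (rpow_pos_of_pos hy s)
    _ = y ^ (M - N) := by rw [← rpow_add hy]; ring_nf
  show _ < _
  calc n₁ * (x + n₂) ^ N / (m₁ * y ^ M) = n₁ / m₁ * ((x + n₂) ^ N / y ^ M) := by
        rw [mul_div_mul_comm]
    _ ≤ n₁ / m₁ * (y ^ (M - N))⁻¹ := by
      gcongr
      exact rpow_div_rpow_le_inv_rpow_sub (by linarith) (by linarith) hy hN0.le
    _ < n₁ / m₁ * (p * (n₁ / m₁ * φ))⁻¹ := by gcongr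
    _ = (φ * p)⁻¹ := by field_simp
    _ ≤ (-1 + √(1 + 4 * p)) / (2 * p) := inv_goldenRatio_mul_le_quadratic_root hp

/-- Lemma 4.2 of the paper: the positive root `a*(x)` of `−(x+1)^s a² − a + 1 = 0`
stays above the `a`-intercept `n(x)/m(x)` of the moving boundary line. -/
theorem root_above_intercept_poly
    (s m₁ m₂ n₁ n₂ M N : ℝ)
    (hs : 1 ≤ s)
    (hm₁ : 0 < m₁) (hn₁ : 0 < n₁)
    (hN0 : 0 < N) (hN1 : N < 1)
    (hn₂ : 1 < n₂) (hn₂m₂ : n₂ < m₂)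
    (hM : M > N + s)
    (hm₂ : m₂ > (n₁ / (2 * m₁) * (1 + Real.sqrt 5)) ^ (1 / (M - N - s))) :
    ∀ x : ℝ, 0 ≤ x →
      (-1 + Real.sqrt (1 + 4 * (x + 1) ^ s)) / (2 * (x + 1) ^ s)
        > n₁ * (x + n₂) ^ N / (m₁ * (x + m₂) ^ M) :=
  root_above_intercept_poly_general s m₁ m₂ n₁ n₂ M N hs hm₁ hn₁ hN0 hn₂ hn₂m₂ hM hm₂
end

section
/- Let s ≥ 1 and let m₁, m₂, n₁, n₂, M, N satisfy 0 < N < 1, M > N + s, n₁ > 1 + √3, n₂ > 1, m₁ > √2, and m₂ > max{ n₂, ((m₁n₁ + M m₁² n₁ + n₁²)/m₁²)^{1/(1−N)}, ((n₁/(2m₁))(1+√5))^{1/(M−N−s)} }. Set m* = m₁ m₂^M and n* = n₁ n₂^N. Let T ∈ (0, ∞] and let a, b : [0,T) → ℝ be differentiable solutions of b' = −b²/2 − (t+1)^s a² − a + 1 and a' = −b a on [0,T). If a(0) = a₀ > 0, b(0) > 0, and b(0) > m* a₀ − n*, then for all t ∈ [0,T): b(t) > 0 and 0 < a(t) ≤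 a₀. -/
/-!
A barrier argument. Write `m(t) = m₁ (t + m₂)^M`, `n(t) = n₁ (t + n₂)^N`, `p(t) = (t + 1)^s` and
`G = b - m a + n`. Since `a' = -b a` is linear in `a`, uniqueness for linear equations keeps `a`
positive. At the first time where `b` or `G` vanishes, the vanishing function has nonpositive
derivative. On `b = 0 ≤ G` we have `a ≤ q := n / m`, so `b' ≥ 1 - q - p q² > 0`. On `G = 0 ≤ b`,
substituting `b = m a - n` turns `G'` into a quadratic in `a ≥ q` which is convex (`m² ≥ 2p`),
negative at `a = 0` (`n₁ > 1 + √3`) and positive at `a = q`, hence positive. Both cases rest on the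
estimate `p q² + (m' + 1) q < 1`, which is what the lower bound on `m₂` buys. Finally
`a' = -b a < 0` gives `a ≤ a₀`.
-/

open Set

theorem exists_first_zero_of_continuousOn {f : ℝ → ℝ} {x y : ℝ} (hxy : x ≤ y)
    (hf : ContinuousOn f (Icc x y)) (hx : 0 < f x) (hy : f y ≤ 0) :
    ∃ u ∈ Ioc x y, f u = 0 ∧ ∀ τ ∈ Ico x u, 0 < f τ := by
  set S := Icc x y ∩ f ⁻¹' Iic 0
  have hS : IsClosed S := hf.preimage_isClosed_of_isClosed isClosed_Icc isClosed_Iic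
  have hbdd : BddBelow S := ⟨x, fun τ hτ => hτ.1.1⟩
  obtain ⟨⟨hxu, huy⟩, hu : f (sInf S) ≤ 0⟩ := hS.csInf_mem ⟨y, ⟨hxy, le_rfl⟩, hy⟩ hbdd
  set u := sInf S
  have hbefore : ∀ τ ∈ Ico x u, 0 < f τ := fun τ hτ => by
    by_contra! h
    exact (csInf_le hbdd ⟨⟨hτ.1, hτ.2.le.trans huy⟩, h⟩).not_gt hτ.2
  have hxu' : x < u := hxu.lt_of_ne fun h => hu.not_gt (h ▸ hx)
  refine ⟨u, ⟨hxu', huy⟩, le_antisymm hu ?_, hbefore⟩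
  -- a strictly negative value at `u` would force an earlier zero
  by_contra! hneg
  obtain ⟨w, hw, hfw⟩ :=
    intermediate_value_Icc' hxu (hf.mono (Icc_subset_Icc_right huy)) ⟨hneg.le, hx.le⟩
  exact (hbefore w ⟨hw.1, hw.2.lt_of_ne (by rintro rfl; linarith)⟩).ne' hfw

theorem HasDerivAt.nonpos_of_pos_of_eq_zero {f : ℝ → ℝ} {d x u : ℝ} (hf : HasDerivAt f d u)
    (hxu : x < u) (hpos : ∀ τ ∈ Ico x u, 0 < f τ) (hu : f u = 0) : d ≤ 0 := by
  have hmin : IsMinOn f (Icc x u) u := by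
    refine isMinOn_iff.2 fun τ hτ => ?_
    rcases hτ.2.lt_or_eq with h | rfl
    · exact hu.trans_le (hpos τ ⟨hτ.1, h⟩).le
    · exact le_rfl
  have hcone : x - u ∈ posTangentConeAt (Icc x u) u :=
    sub_mem_posTangentConeAt_of_segment_subset
      ((convex_Icc x u).segment_subset (right_mem_Icc.2 hxu.le) (left_mem_Icc.2 hxu.le))
  have := hmin.localize.hasFDerivWithinAt_nonneg hf.hasFDerivAt.hasFDerivWithinAt hcone
  simp only [ContinuousLinearMap.toSpanSingleton_apply, smul_eq_mul] at this
  nlinarith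

theorem pos_of_deriv_pos_at_zero {f g f' g' : ℝ → ℝ} {x y : ℝ}
    (hf : ∀ u ∈ Icc x y, HasDerivAt f (f' u) u) (hg : ∀ u ∈ Icc x y, HasDerivAt g (g' u) u)
    (hfx : 0 < f x) (hgx : 0 < g x)
    (hf' : ∀ u ∈ Ioc x y, f u = 0 → 0 ≤ g u → 0 < f' u)
    (hg' : ∀ u ∈ Ioc x y, g u = 0 → 0 ≤ f u → 0 < g' u) :
    ∀ τ ∈ Icc x y, 0 < f τ ∧ 0 < g τ := by
  intro τ hτ
  by_contra! hτ'
  have hcont : ContinuousOn (fun t => min (f t) (g t)) (Icc x τ) := fun t ht =>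
    have ht' : t ∈ Icc x y := ⟨ht.1, ht.2.trans hτ.2⟩
    ContinuousAt.continuousWithinAt
      ((hf t ht').continuousAt.min (hg t ht').continuousAt :)
  have hτ0 : min (f τ) (g τ) ≤ 0 := by
    by_cases h : 0 < f τ
    · exact (min_le_right _ _).trans (hτ' h)
    · exact (min_le_left _ _).trans (not_lt.1 h)
  obtain ⟨u, hu, hu0, hbefore⟩ :=
    exists_first_zero_of_continuousOn hτ.1 hcont (lt_min hfx hgx) hτ0
  have hu' : u ∈ Ioc x y := ⟨hu.1, hu.2.trans hτ.2⟩
  have hfu : 0 ≤ f u := hu0 ▸ min_le_left _ _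
  have hgu : 0 ≤ g u := hu0 ▸ min_le_right _ _
  rcases min_eq_iff.1 hu0 with ⟨hfu0, -⟩ | ⟨hgu0, -⟩
  · exact (hf' u hu' hfu0 hgu).not_ge <|
      (hf u (Ioc_subset_Icc_self hu')).nonpos_of_pos_of_eq_zero hu.1
        (fun t ht => (lt_min_iff.1 (hbefore t ht)).1) hfu0
  · exact (hg' u hu' hgu0 hfu).not_ge <|
      (hg u (Ioc_subset_Icc_self hu')).nonpos_of_pos_of_eq_zero hu.1
        (fun t ht => (lt_min_iff.1 (hbefore t ht)).2) hgu0

theorem eq_zero_of_hasDerivAt_mul_self {f c : ℝ → ℝ} {x y : ℝ} (hxy : x ≤ y)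
    (hc : ContinuousOn c (Icc x y)) (hf : ∀ τ ∈ Icc x y, HasDerivAt f (c τ * f τ) τ)
    (hy : f y = 0) : f x = 0 := by
  obtain ⟨K, hK⟩ := isCompact_Icc.exists_bound_of_continuousOn hc
  have hlip : ∀ τ ∈ Ioc x y, LipschitzOnWith K.toNNReal (fun z => c τ * z) univ := fun τ hτ =>
    ((lipschitzWith_smul (c τ)).weaken (by
      rw [← NNReal.coe_le_coe, coe_nnnorm, Real.coe_toNNReal']
      exact (hK τ (Ioc_subset_Icc_self hτ)).trans (le_max_left _ _))).lipschitzOnWith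
  have hfc : ContinuousOn f (Icc x y) := fun τ hτ => (hf τ hτ).continuousAt.continuousWithinAt
  have := ODE_solution_unique_of_mem_Icc_left (g := 0) hlip hfc
    (fun τ hτ => (hf τ (Ioc_subset_Icc_self hτ)).hasDerivWithinAt) (fun _ _ => mem_univ _)
    continuousOn_const
    (fun τ _ => by rw [Pi.zero_apply, mul_zero]; exact hasDerivWithinAt_const τ (Iic τ) 0)
    (fun _ _ => mem_univ _) hy
  exact this (left_mem_Icc.2 hxy)

theorem pos_of_hasDerivAt_mul_self {f c : ℝ → ℝ} {x y : ℝ} (hc : ContinuousOn c (Icc x y))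
    (hf : ∀ τ ∈ Icc x y, HasDerivAt f (c τ * f τ) τ) (hx : 0 < f x) :
    ∀ τ ∈ Icc x y, 0 < f τ := by
  intro τ hτ
  by_contra! hτ0
  have hsub : Icc x τ ⊆ Icc x y := Icc_subset_Icc_right hτ.2
  obtain ⟨u, hu, hu0, -⟩ := exists_first_zero_of_continuousOn hτ.1
    (fun t ht => (hf t (hsub ht)).continuousAt.continuousWithinAt) hx hτ0
  have hsub' : Icc x u ⊆ Icc x y := Icc_subset_Icc_right (hu.2.trans hτ.2)
  exact hx.ne' (eq_zero_of_hasDerivAt_mul_self hu.1.le (hc.mono hsub')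
    (fun t ht => hf t (hsub' ht)) hu0)

open Real

theorem hasDerivAt_const_mul_add_rpow (c d k : ℝ) {t : ℝ} (ht : 0 < t + d) :
    HasDerivAt (fun x => c * (x + d) ^ k) (c * (k * (t + d) ^ (k - 1))) t := by
  simpa using (((hasDerivAt_id t).add_const d).rpow_const (p := k) (Or.inl ht.ne')).const_mul c

theorem key_bound {s M N m₁ n₁ p P Q : ℝ} (hs : 1 ≤ s) (hN : 0 < N) (hM : N + s < M)
    (hm₁ : 0 < m₁) (hn₁ : 0 < n₁) (hp : p ≤ P ^ s) (hQ : 0 < Q) (hQP : Q ≤ P)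
    (hP : 1 ≤ P) :
    p * (n₁ * Q ^ N / (m₁ * P ^ M)) ^ 2
        + (m₁ * (M * P ^ (M - 1)) + 1) * (n₁ * Q ^ N / (m₁ * P ^ M))
      ≤ (m₁ * n₁ + M * m₁ ^ 2 * n₁ + n₁ ^ 2) / m₁ ^ 2 * P ^ (N - 1) := by
  have hP0 : 0 < P := by linarith
  have hM0 : 0 < M := by linarith
  have hq0 : 0 ≤ n₁ * Q ^ N / (m₁ * P ^ M) := by positivity
  have hq : n₁ * Q ^ N / (m₁ * P ^ M) ≤ n₁ / m₁ * P ^ (N - M) := by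
    calc n₁ * Q ^ N / (m₁ * P ^ M) ≤ n₁ * P ^ N / (m₁ * P ^ M) := by gcongr
      _ = n₁ / m₁ * P ^ (N - M) := by rw [rpow_sub hP0]; field_simp
  have he : P ^ (N - M) ≤ P ^ (N - 1) := rpow_le_rpow_of_exponent_le hP (by linarith)
  have hpq : p * (n₁ * Q ^ N / (m₁ * P ^ M)) ^ 2 ≤ (n₁ / m₁) ^ 2 * P ^ (N - 1) := by
    calc p * (n₁ * Q ^ N / (m₁ * P ^ M)) ^ 2 ≤ P ^ s * (n₁ / m₁ * P ^ (N - M)) ^ 2 := by gcongr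
      _ = (n₁ / m₁) ^ 2 * P ^ (s + (N - M) + (N - M)) := by
        rw [rpow_add hP0, rpow_add hP0]; ring
      _ ≤ (n₁ / m₁) ^ 2 * P ^ (N - 1) :=
        mul_le_mul_of_nonneg_left (rpow_le_rpow_of_exponent_le hP (by linarith)) (by positivity)
  have hm'q : m₁ * (M * P ^ (M - 1)) * (n₁ * Q ^ N / (m₁ * P ^ M)) ≤ M * n₁ * P ^ (N - 1) := by
    calc m₁ * (M * P ^ (M - 1)) * (n₁ * Q ^ N / (m₁ * P ^ M))
        ≤ m₁ * (M * P ^ (M - 1)) * (n₁ / m₁ * P ^ (N - M)) := by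
          gcongr
      _ = M * n₁ * P ^ (M - 1 + (N - M)) := by rw [rpow_add hP0]; field_simp
      _ = M * n₁ * P ^ (N - 1) := by ring_nf
  have hX : (m₁ * n₁ + M * m₁ ^ 2 * n₁ + n₁ ^ 2) / m₁ ^ 2
      = n₁ / m₁ + M * n₁ + (n₁ / m₁) ^ 2 := by
    field_simp
  rw [hX]
  have hq' := hq.trans (mul_le_mul_of_nonneg_left he (div_pos hn₁ hm₁).le)
  linarith

theorem rpow_le_sq_div_two {s m₁ m₂ M t : ℝ} (hs : 0 ≤ s) (hsM : s ≤ 2 * M) (hm₁ : 2 ≤ m₁ ^ 2)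
    (hm₂ : 1 ≤ m₂) (ht : 0 ≤ t) : (t + 1) ^ s ≤ (m₁ * (t + m₂) ^ M) ^ 2 / 2 := by
  have hP : 1 ≤ t + m₂ := by linarith
  calc (t + 1) ^ s ≤ (t + m₂) ^ s := rpow_le_rpow (by linarith) (by linarith) hs
    _ ≤ (t + m₂) ^ (2 * M) := rpow_le_rpow_of_exponent_le hP hsM
    _ = ((t + m₂) ^ M) ^ 2 := by rw [mul_comm, rpow_mul (by linarith)]; norm_cast
    _ ≤ m₁ ^ 2 / 2 * ((t + m₂) ^ M) ^ 2 := le_mul_of_one_le_left (by positivity) (by linarith)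
    _ = (m₁ * (t + m₂) ^ M) ^ 2 / 2 := by ring

theorem one_add_deriv_lt_sq_div_two {n₁ n₂ N t : ℝ} (hn₁ : 0 < n₁) (hn₁sq : 2 * n₁ + 2 < n₁ ^ 2)
    (hN0 : 0 ≤ N) (hN1 : N ≤ 1) (hn₂ : 1 ≤ n₂) (ht : 0 ≤ t) :
    1 + n₁ * (N * (t + n₂) ^ (N - 1)) < (n₁ * (t + n₂) ^ N) ^ 2 / 2 := by
  have hQ : 1 ≤ t + n₂ := by linarith
  have h1 : (t + n₂) ^ (N - 1) ≤ 1 := rpow_le_one_of_one_le_of_nonpos hQ (by linarith)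
  have h2 : 1 ≤ (t + n₂) ^ N := one_le_rpow hQ hN0
  have h3 : N * (t + n₂) ^ (N - 1) ≤ 1 := by
    nlinarith [rpow_nonneg (by linarith : (0:ℝ) ≤ t + n₂) (N - 1)]
  have h4 : n₁ ≤ n₁ * (t + n₂) ^ N := le_mul_of_one_le_right hn₁.le h2
  nlinarith [mul_le_mul_of_nonneg_left h3 hn₁.le]

theorem quadratic_pos_of_le {A B C q z : ℝ} (hA : 0 ≤ A) (hC : C < 0) (hq : 0 < q)
    (hqz : q ≤ z) (hFq : 0 < A * q ^ 2 - B * q + C) : 0 < A * z ^ 2 - B * z + C := by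
  have key : q * (A * z ^ 2 - B * z + C)
      = z * (A * q ^ 2 - B * q + C) + (z - q) * (A * z * q - C) := by
    ring
  have hz : 0 < z := hq.trans_le hqz
  have hAzq : 0 ≤ A * z * q := by positivity
  refine pos_of_mul_pos_right (a := q) ?_ hq.le
  rw [key]
  exact add_pos_of_pos_of_nonneg (mul_pos hz hFq) (mul_nonneg (by linarith) (by linarith))

theorem b_rhs_pos_of_b_eq_zero {p m m' n a b : ℝ} (hp : 0 ≤ p) (hm : 0 < m) (hm' : 0 ≤ m')
    (ha : 0 ≤ a) (hkey : p * (n / m) ^ 2 + (m' + 1) * (n / m) < 1) (hb : b = 0)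
    (hG : 0 ≤ b - m * a + n) : 0 < -b ^ 2 / 2 - p * a ^ 2 - a + 1 := by
  have haq : a ≤ n / m := by rw [le_div_iff₀ hm]; linarith
  have hq : 0 ≤ n / m := ha.trans haq
  have : p * a ^ 2 ≤ p * (n / m) ^ 2 := by gcongr
  nlinarith [mul_nonneg hm' hq]

theorem line_rhs_pos_of_on_line {p m m' n n' a b : ℝ} (hm : 0 < m) (hn : 0 < n) (hn' : 0 ≤ n')
    (hp : p ≤ m ^ 2 / 2) (hn2 : 1 + n' < n ^ 2 / 2)
    (hkey : p * (n / m) ^ 2 + (m' + 1) * (n / m) < 1) (hb : 0 ≤ b) (hG : b - m * a + n = 0) :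
    0 < -b ^ 2 / 2 - p * a ^ 2 - a + 1 - (m' * a + m * (-b * a)) + n' := by
  have hmq : m * (n / m) = n := mul_div_cancel₀ n hm.ne'
  have hqa : n / m ≤ a := by rw [div_le_iff₀ hm]; linarith
  have hquad : -b ^ 2 / 2 - p * a ^ 2 - a + 1 - (m' * a + m * (-b * a)) + n'
      = (m ^ 2 / 2 - p) * a ^ 2 - (m' + 1) * a + (1 + n' - n ^ 2 / 2) := by
    rw [show b = m * a - n by linarith]; ring
  rw [hquad]
  refine quadratic_pos_of_le (by linarith) (by linarith) (div_pos hn hm) hqa ?_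
  have : m ^ 2 * (n / m) ^ 2 = n ^ 2 := by rw [← mul_pow, hmq]
  linarith

structure AdmissibleParams (s m₁ m₂ n₁ n₂ M N : ℝ) : Prop where
  one_le_s : 1 ≤ s
  N_pos : 0 < N
  N_lt_one : N < 1
  lt_M : N + s < M
  m₁_pos : 0 < m₁
  two_lt_m₁_sq : 2 < m₁ ^ 2
  n₁_pos : 0 < n₁
  two_mul_add_two_lt_n₁_sq : 2 * n₁ + 2 < n₁ ^ 2
  one_lt_n₂ : 1 < n₂
  n₂_le_m₂ : n₂ ≤ m₂
  lt_m₂_rpow : (m₁ * n₁ + M * m₁ ^ 2 * n₁ + n₁ ^ 2) / m₁ ^ 2 < m₂ ^ (1 - N)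

namespace AdmissibleParams

variable {s m₁ m₂ n₁ n₂ M N : ℝ}

theorem of_lt (hs : 1 ≤ s) (hN0 : 0 < N) (hN1 : N < 1) (hM : N + s < M)
    (hn₁ : 1 + √3 < n₁) (hn₂ : 1 < n₂) (hm₁ : √2 < m₁) (hn₂m₂ : n₂ < m₂)
    (hm₂ : ((m₁ * n₁ + M * m₁ ^ 2 * n₁ + n₁ ^ 2) / m₁ ^ 2) ^ (1 / (1 - N)) < m₂) :
    AdmissibleParams s m₁ m₂ n₁ n₂ M N := by
  have hm₁0 : 0 < m₁ := (sqrt_nonneg 2).trans_lt hm₁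
  have hn₁0 : 0 < n₁ := by linarith [sqrt_nonneg 3]
  have hM0 : 0 < M := by linarith
  refine ⟨hs, hN0, hN1, hM, hm₁0, lt_sq_of_sqrt_lt hm₁, hn₁0,
    by nlinarith [lt_sq_of_sqrt_lt (show √3 < n₁ - 1 by linarith)], hn₂, hn₂m₂.le, ?_⟩
  rwa [← rpow_inv_lt_iff_of_pos (by positivity) (by linarith) (by linarith), ← one_div]

theorem n₂_pos (h : AdmissibleParams s m₁ m₂ n₁ n₂ M N) : 0 < n₂ := by linarith [h.one_lt_n₂]

theorem m₂_pos (h : AdmissibleParams s m₁ m₂ n₁ n₂ M N) : 0 < m₂ := by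
  linarith [h.n₂_pos, h.n₂_le_m₂]

theorem key_estimate (h : AdmissibleParams s m₁ m₂ n₁ n₂ M N) {t : ℝ} (ht : 0 ≤ t) :
    (t + 1) ^ s * (n₁ * (t + n₂) ^ N / (m₁ * (t + m₂) ^ M)) ^ 2
      + (m₁ * (M * (t + m₂) ^ (M - 1)) + 1) * (n₁ * (t + n₂) ^ N / (m₁ * (t + m₂) ^ M)) < 1 := by
  have hm₂ := h.m₂_pos
  obtain ⟨hs, hN0, hN1, hM, hm₁, -, hn₁, -, hn₂, hn₂m₂, hK⟩ := h
  set X := (m₁ * n₁ + M * m₁ ^ 2 * n₁ + n₁ ^ 2) / m₁ ^ 2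
  have hM0 : 0 < M := by linarith
  have hX : 0 ≤ X := by positivity
  have hp : (t + 1) ^ s ≤ (t + m₂) ^ s := rpow_le_rpow (by linarith) (by linarith) (by linarith)
  refine (key_bound hs hN0 hM hm₁ hn₁ hp (by linarith) (by linarith) (by linarith)).trans_lt ?_
  calc X * (t + m₂) ^ (N - 1) ≤ X * m₂ ^ (N - 1) := by
        gcongr X * ?_; apply rpow_le_rpow_of_nonpos <;> linarith
    _ < m₂ ^ (1 - N) * m₂ ^ (N - 1) := by gcongr
    _ = 1 := by rw [← rpow_add (by linarith)]; simp

theorem b_rhs_pos (h : AdmissibleParams s m₁ m₂ n₁ n₂ M N) {t a b : ℝ} (ht : 0 ≤ t) (ha : 0 ≤ a)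
    (hb : b = 0)
    (hG : 0 ≤ b - m₁ * (t + m₂) ^ M * a + n₁ * (t + n₂) ^ N) :
    0 < -b ^ 2 / 2 - (t + 1) ^ s * a ^ 2 - a + 1 := by
  have := h.m₁_pos
  have := h.m₂_pos
  have : 0 < M := by linarith [h.lt_M, h.N_pos, h.one_le_s]
  exact b_rhs_pos_of_b_eq_zero (by positivity) (by positivity) (by positivity) ha
    (h.key_estimate ht) hb hG

theorem line_rhs_pos (h : AdmissibleParams s m₁ m₂ n₁ n₂ M N) {t a b : ℝ} (ht : 0 ≤ t)
    (hb : 0 ≤ b) (hG : b - m₁ * (t + m₂) ^ M * a + n₁ * (t + n₂) ^ N = 0) :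
    0 < -b ^ 2 / 2 - (t + 1) ^ s * a ^ 2 - a + 1
      - (m₁ * (M * (t + m₂) ^ (M - 1)) * a + m₁ * (t + m₂) ^ M * (-b * a))
      + n₁ * (N * (t + n₂) ^ (N - 1)) := by
  have := h.m₁_pos
  have := h.n₁_pos
  have := h.N_pos
  have := h.n₂_pos
  have := h.m₂_pos
  exact line_rhs_pos_of_on_line (by positivity) (by positivity) (by positivity)
    (rpow_le_sq_div_two (by linarith [h.one_le_s]) (by linarith [h.lt_M, h.N_pos, h.one_le_s])
      h.two_lt_m₁_sq.le (by linarith [h.one_lt_n₂, h.n₂_le_m₂]) ht)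
    (one_add_deriv_lt_sq_div_two h.n₁_pos h.two_mul_add_two_lt_n₁_sq h.N_pos.le h.N_lt_one.le
      h.one_lt_n₂.le ht) (h.key_estimate ht) hb hG

end AdmissibleParams

theorem auxiliary_invariant_region_poly_general
    (s m₁ m₂ n₁ n₂ M N : ℝ)
    (hs : 1 ≤ s)
    (hN0 : 0 < N) (hN1 : N < 1)
    (hM : M > N + s)
    (hn₁ : n₁ > 1 + Real.sqrt 3)
    (hn₂ : n₂ > 1)
    (hm₁ : m₁ > Real.sqrt 2)
    (hm₂ : m₂ > max (max n₂ (((m₁ * n₁ + M * m₁ ^ 2 * n₁ + n₁ ^ 2) / m₁ ^ 2) ^ (1 / (1 - N))))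
        ((n₁ / (2 * m₁) * (1 + Real.sqrt 5)) ^ (1 / (M - N - s))))
    (T : EReal)
    (a b : ℝ → ℝ)
    (hb : ∀ t : ℝ, 0 ≤ t → (t : EReal) < T →
      HasDerivAt b (-(b t) ^ 2 / 2 - (t + 1) ^ s * (a t) ^ 2 - a t + 1) t)
    (ha : ∀ t : ℝ, 0 ≤ t → (t : EReal) < T →
      HasDerivAt a (-(b t) * a t) t)
    (ha0 : 0 < a 0) (hb0 : 0 < b 0)
    (hthr : b 0 > m₁ * m₂ ^ M * a 0 - n₁ * n₂ ^ N) :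
    ∀ t : ℝ, 0 ≤ t → (t : EReal) < T →
      0 < b t ∧ 0 < a t ∧ a t ≤ a 0 := by
  obtain ⟨hn₂m₂, hm₂X⟩ := max_lt_iff.1 (max_lt_iff.1 hm₂).1
  have hP := AdmissibleParams.of_lt hs hN0 hN1 hM hn₁ hn₂ hm₁ hn₂m₂ hm₂X
  intro t ht htT
  have hdom : ∀ τ ∈ Icc 0 t, (τ : EReal) < T := fun τ hτ =>
    (EReal.coe_le_coe_iff.2 hτ.2).trans_lt htT
  have hb' : ∀ τ ∈ Icc 0 t, HasDerivAt b _ τ := fun τ hτ => hb τ hτ.1 (hdom τ hτ)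
  have ha' : ∀ τ ∈ Icc 0 t, HasDerivAt a _ τ := fun τ hτ => ha τ hτ.1 (hdom τ hτ)
  have hapos : ∀ τ ∈ Icc 0 t, 0 < a τ := pos_of_hasDerivAt_mul_self (c := fun τ => -b τ)
    (fun τ hτ => (hb' τ hτ).continuousAt.neg.continuousWithinAt) ha' ha0
  have hline : ∀ τ ∈ Icc 0 t,
      HasDerivAt (fun τ => b τ - m₁ * (τ + m₂) ^ M * a τ + n₁ * (τ + n₂) ^ N)
      (-(b τ) ^ 2 / 2 - (τ + 1) ^ s * (a τ) ^ 2 - a τ + 1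
        - (m₁ * (M * (τ + m₂) ^ (M - 1)) * a τ + m₁ * (τ + m₂) ^ M * (-(b τ) * a τ))
        + n₁ * (N * (τ + n₂) ^ (N - 1))) τ := fun τ hτ =>
    ((hb' τ hτ).sub
      ((hasDerivAt_const_mul_add_rpow m₁ m₂ M (by linarith [hτ.1, hP.m₂_pos])).mul (ha' τ hτ))).add
      (hasDerivAt_const_mul_add_rpow n₁ n₂ N (by linarith [hτ.1, hP.n₂_pos]))
  have hinv := pos_of_deriv_pos_at_zero hb' hline hb0 (by simp only [zero_add]; linarith)
    (fun u hu hbu hGu => hP.b_rhs_pos hu.1.le (hapos u (Ioc_subset_Icc_self hu)).le hbu hGu)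
    (fun u hu hGu hbu => hP.line_rhs_pos hu.1.le hbu hGu)
  have hanti : AntitoneOn a (Icc 0 t) := by
    refine antitoneOn_of_hasDerivWithinAt_nonpos (convex_Icc 0 t)
      (fun τ hτ => (ha' τ hτ).continuousAt.continuousWithinAt)
      (fun τ hτ => (ha' τ (interior_subset hτ)).hasDerivWithinAt) fun τ hτ => ?_
    have hτ' := interior_subset hτ
    nlinarith [(hinv τ hτ').1, hapos τ hτ']
  have ht' : t ∈ Icc 0 t := ⟨ht, le_rfl⟩
  exact ⟨(hinv t ht').1, hapos t ht', hanti ⟨le_rfl, ht⟩ ht' ht⟩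

/-- Invariance of the region `Ω_s = {a > 0, b > 0, b > m* a − n*}` for the auxiliary
system `b' = −b²/2 − (t+1)^s a² − a + 1`, `a' = −b a` (polynomial case). -/
theorem auxiliary_invariant_region_poly
    (s m₁ m₂ n₁ n₂ M N : ℝ)
    (hs : 1 ≤ s)
    (hN0 : 0 < N) (hN1 : N < 1)
    (hM : M > N + s)
    (hn₁ : n₁ > 1 + Real.sqrt 3)
    (hn₂ : n₂ > 1)
    (hm₁ : m₁ > Real.sqrt 2)
    (hm₂ : m₂ > max (max n₂ (((m₁ * n₁ + M * m₁ ^ 2 * n₁ + n₁ ^ 2) / m₁ ^ 2) ^ (1 / (1 - N))))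
        ((n₁ / (2 * m₁) * (1 + Real.sqrt 5)) ^ (1 / (M - N - s))))
    (T : EReal) (hT : 0 < T)
    (a b : ℝ → ℝ)
    (hb : ∀ t : ℝ, 0 ≤ t → (t : EReal) < T →
      HasDerivAt b (-(b t) ^ 2 / 2 - (t + 1) ^ s * (a t) ^ 2 - a t + 1) t)
    (ha : ∀ t : ℝ, 0 ≤ t → (t : EReal) < T →
      HasDerivAt a (-(b t) * a t) t)
    (ha0 : 0 < a 0) (hb0 : 0 < b 0)
    (hthr : b 0 > m₁ * m₂ ^ M * a 0 - n₁ * n₂ ^ N) :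
    ∀ t : ℝ, 0 ≤ t → (t : EReal) < T →
      0 < b t ∧ 0 < a t ∧ a t ≤ a 0 :=
  auxiliary_invariant_region_poly_general s m₁ m₂ n₁ n₂ M N hs hN0 hN1 hM hn₁ hn₂ hm₁ hm₂ T a b hb
    ha ha0 hb0 hthr
end

section
/- Let s ≥ 1, T ∈ (0, ∞], and let A : [0,T) → ℝ be continuous with A(t) ≥ −(t+1)^s for all t. Let d, ρ, b, a : [0,T) → ℝ be differentiable and satisfy d' = −d²/2 + A(t)ρ² − ρ + 1, ρ' = −ρ d, b' = −b²/2 − (t+1)^s a² − a + 1, and a' = −b a on [0,T). If b(0) < d(0) and 0 < ρ(0) < a(0), then for all t ∈ [0,T): b(t) < d(t) and 0 < ρ(t) < a(t). -/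
/-!
Let `t₀` be the first time at which one of the three strict inequalities fails. Before `t₀` all
three hold, and each gap `ρ`, `a - ρ`, `d - b` then satisfies a linear differential inequality
`w' ≥ -C w`: for `d - b` this uses `A ≥ -(t+1)^s` and `ρ² < a²`, for `a - ρ` it uses
`(a - ρ)' = -b (a - ρ) + ρ (d - b)`. Multiplying by `exp (C t)` shows that none of the gaps can
reach `0` at `t₀`, a contradiction.
-/

open Set

lemma pos_of_hasDerivAt_of_neg_mul_le {w w' : ℝ → ℝ} {x y C : ℝ} (hxy : x ≤ y)
    (hw : ∀ τ ∈ Icc x y, HasDerivAt w (w' τ) τ) (hw' : ∀ τ ∈ Ioo x y, -(C * w τ) ≤ w' τ)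
    (hx : 0 < w x) : 0 < w y := by
  have hg : ∀ τ ∈ Icc x y,
      HasDerivAt (fun τ => Real.exp (τ * C) * w τ) (Real.exp (τ * C) * (w' τ + C * w τ)) τ := by
    intro τ hτ
    exact ((hasDerivAt_mul_const C).exp.fun_mul (hw τ hτ)).congr_deriv (by ring)
  have hmono : MonotoneOn (fun τ => Real.exp (τ * C) * w τ) (Icc x y) := by
    refine monotoneOn_of_hasDerivWithinAt_nonneg
      (f' := fun τ => Real.exp (τ * C) * (w' τ + C * w τ)) (convex_Icc x y)
      (fun τ hτ => (hg τ hτ).continuousAt.continuousWithinAt) (fun τ hτ => ?_) (fun τ hτ => ?_)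
    all_goals rw [interior_Icc] at hτ
    · exact (hg τ (Ioo_subset_Icc_self hτ)).hasDerivWithinAt
    · exact mul_nonneg (Real.exp_pos _).le (by linarith [hw' τ hτ])
  have := hmono (left_mem_Icc.2 hxy) (right_mem_Icc.2 hxy) hxy
  exact pos_of_mul_pos_right ((mul_pos (Real.exp_pos _) hx).trans_le this) (Real.exp_pos _).le

lemma pos_on_Icc_of_pos_before {m : ℝ → ℝ} {x y : ℝ} (hm : ContinuousOn m (Icc x y))
    (hx : 0 < m x) (hstep : ∀ z ∈ Ioc x y, (∀ τ ∈ Ico x z, 0 < m τ) → 0 < m z) :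
    ∀ z ∈ Icc x y, 0 < m z := by
  by_contra! ⟨z, hz, hmz⟩
  set K := Icc x y ∩ m ⁻¹' Iic 0
  have hKbdd : BddBelow K := ⟨x, fun τ hτ => hτ.1.1⟩
  have hfirst : sInf K ∈ K :=
    (hm.preimage_isClosed_of_isClosed isClosed_Icc isClosed_Iic).csInf_mem ⟨z, hz, hmz⟩ hKbdd
  have hbefore : ∀ τ ∈ Ico x (sInf K), 0 < m τ := fun τ hτ => by
    by_contra! h
    exact (csInf_le hKbdd ⟨⟨hτ.1, hτ.2.le.trans hfirst.1.2⟩, h⟩).not_gt hτ.2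
  have hx_lt : x < sInf K := hfirst.1.1.lt_of_ne fun h => (h ▸ hfirst.2 : m x ≤ 0).not_gt hx
  exact (hstep _ ⟨hx_lt, hfirst.1.2⟩ hbefore).not_ge hfirst.2

lemma comparison_at_of_before {s t z : ℝ} {A d ρ b a : ℝ → ℝ} (hz : z ∈ Ioc 0 t)
    (hA : ∀ τ ∈ Icc 0 t, -(τ + 1) ^ s ≤ A τ)
    (hd : ∀ τ ∈ Icc 0 t, HasDerivAt d (-(d τ) ^ 2 / 2 + A τ * (ρ τ) ^ 2 - ρ τ + 1) τ)
    (hρ : ∀ τ ∈ Icc 0 t, HasDerivAt ρ (-(ρ τ) * d τ) τ)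
    (hb : ∀ τ ∈ Icc 0 t, HasDerivAt b (-(b τ) ^ 2 / 2 - (τ + 1) ^ s * (a τ) ^ 2 - a τ + 1) τ)
    (ha : ∀ τ ∈ Icc 0 t, HasDerivAt a (-(b τ) * a τ) τ)
    (h0 : b 0 < d 0 ∧ 0 < ρ 0 ∧ ρ 0 < a 0)
    (hbefore : ∀ τ ∈ Ioo 0 z, b τ < d τ ∧ 0 < ρ τ ∧ ρ τ < a τ) :
    b z < d z ∧ 0 < ρ z ∧ ρ z < a z := by
  have hsub : Icc 0 z ⊆ Icc 0 t := Icc_subset_Icc_right hz.2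
  have hsub' : Ioo 0 z ⊆ Icc 0 t := Ioo_subset_Icc_self.trans hsub
  obtain ⟨Cd, hCd⟩ := isCompact_Icc.bddAbove_image
    fun τ hτ => (hd τ hτ).continuousAt.continuousWithinAt
  obtain ⟨Cb, hCb⟩ := isCompact_Icc.bddAbove_image
    fun τ hτ => (hb τ hτ).continuousAt.continuousWithinAt
  have hdC : ∀ τ ∈ Ioo 0 z, d τ ≤ Cd := fun τ hτ => hCd (mem_image_of_mem d (hsub' hτ))
  have hbC : ∀ τ ∈ Ioo 0 z, b τ ≤ Cb := fun τ hτ => hCb (mem_image_of_mem b (hsub' hτ))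
  have hρz : 0 < ρ z := by
    refine pos_of_hasDerivAt_of_neg_mul_le (C := Cd) hz.1.le (fun τ hτ => hρ τ (hsub hτ))
      (fun τ hτ => ?_) h0.2.1
    nlinarith [(hbefore τ hτ).2.1, hdC τ hτ]
  have haρz : 0 < a z - ρ z := by
    refine pos_of_hasDerivAt_of_neg_mul_le (w := fun τ => a τ - ρ τ) (C := Cb) hz.1.le
      (fun τ hτ => (ha τ (hsub hτ)).sub (hρ τ (hsub hτ))) (fun τ hτ => ?_) (sub_pos.2 h0.2.2)
    obtain ⟨hbd, hρτ, hρa⟩ := hbefore τ hτ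
    nlinarith [mul_pos hρτ (sub_pos.2 hbd), mul_le_mul_of_nonneg_right (hbC τ hτ) (sub_pos.2 hρa).le]
  have hdbz : 0 < d z - b z := by
    refine pos_of_hasDerivAt_of_neg_mul_le (w := fun τ => d τ - b τ) (C := (Cd + Cb) / 2)
      hz.1.le (fun τ hτ => (hd τ (hsub hτ)).sub (hb τ (hsub hτ))) (fun τ hτ => ?_) (sub_pos.2 h0.1)
    obtain ⟨hbd, hρτ, hρa⟩ := hbefore τ hτ
    have hpow : 0 ≤ (τ + 1) ^ s := Real.rpow_nonneg (by linarith [hτ.1]) s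
    have hAρ : -(τ + 1) ^ s * ρ τ ^ 2 ≤ A τ * ρ τ ^ 2 :=
      mul_le_mul_of_nonneg_right (hA τ (hsub' hτ)) (sq_nonneg _)
    have hρa_sq : (τ + 1) ^ s * ρ τ ^ 2 ≤ (τ + 1) ^ s * a τ ^ 2 :=
      mul_le_mul_of_nonneg_left (pow_le_pow_left₀ hρτ.le hρa.le 2) hpow
    have hdb_sq : (d τ + b τ) * (d τ - b τ) ≤ (Cd + Cb) * (d τ - b τ) :=
      mul_le_mul_of_nonneg_right (add_le_add (hdC τ hτ) (hbC τ hτ)) (sub_pos.2 hbd).le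
    nlinarith
  exact ⟨sub_pos.1 hdbz, hρz, sub_pos.1 haρz⟩

lemma comparison_on_Icc {s t : ℝ} {A d ρ b a : ℝ → ℝ}
    (hA : ∀ τ ∈ Icc 0 t, -(τ + 1) ^ s ≤ A τ)
    (hd : ∀ τ ∈ Icc 0 t, HasDerivAt d (-(d τ) ^ 2 / 2 + A τ * (ρ τ) ^ 2 - ρ τ + 1) τ)
    (hρ : ∀ τ ∈ Icc 0 t, HasDerivAt ρ (-(ρ τ) * d τ) τ)
    (hb : ∀ τ ∈ Icc 0 t, HasDerivAt b (-(b τ) ^ 2 / 2 - (τ + 1) ^ s * (a τ) ^ 2 - a τ + 1) τ)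
    (ha : ∀ τ ∈ Icc 0 t, HasDerivAt a (-(b τ) * a τ) τ)
    (h0 : b 0 < d 0 ∧ 0 < ρ 0 ∧ ρ 0 < a 0) :
    ∀ τ ∈ Icc 0 t, b τ < d τ ∧ 0 < ρ τ ∧ ρ τ < a τ := by
  set m : ℝ → ℝ := fun τ => min (d τ - b τ) (min (ρ τ) (a τ - ρ τ))
  have hm : ∀ τ, 0 < m τ ↔ b τ < d τ ∧ 0 < ρ τ ∧ ρ τ < a τ := by
    simp only [m, lt_min_iff, sub_pos, implies_true]
  have hcont : ContinuousOn m (Icc 0 t) := fun τ hτ => by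
    have hd' := (hd τ hτ).continuousAt
    have hρ' := (hρ τ hτ).continuousAt
    have hmτ : ContinuousAt m τ :=
      (hd'.sub (hb τ hτ).continuousAt).min (hρ'.min ((ha τ hτ).continuousAt.sub hρ'))
    exact hmτ.continuousWithinAt
  intro τ hτ
  refine (hm τ).1 (pos_on_Icc_of_pos_before hcont ((hm 0).2 h0) (fun z hz hbefore => ?_) τ hτ)
  exact (hm z).2 (comparison_at_of_before hz hA hd hρ hb ha h0
    fun τ hτ => (hm τ).1 (hbefore τ (Ioo_subset_Ico_self hτ)))

theorem comparison_principle_poly_general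
    (s : ℝ)
    (T : EReal)
    (A d ρ b a : ℝ → ℝ)
    (hAlb : ∀ t : ℝ, 0 ≤ t → (t : EReal) < T → -(t + 1) ^ s ≤ A t)
    (hd : ∀ t : ℝ, 0 ≤ t → (t : EReal) < T →
      HasDerivAt d (-(d t) ^ 2 / 2 + A t * (ρ t) ^ 2 - ρ t + 1) t)
    (hρ : ∀ t : ℝ, 0 ≤ t → (t : EReal) < T →
      HasDerivAt ρ (-(ρ t) * d t) t)
    (hb : ∀ t : ℝ, 0 ≤ t → (t : EReal) < T →
      HasDerivAt b (-(b t) ^ 2 / 2 - (t + 1) ^ s * (a t) ^ 2 - a t + 1) t)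
    (ha : ∀ t : ℝ, 0 ≤ t → (t : EReal) < T →
      HasDerivAt a (-(b t) * a t) t)
    (hbd0 : b 0 < d 0) (hρ0 : 0 < ρ 0) (hρa0 : ρ 0 < a 0) :
    ∀ t : ℝ, 0 ≤ t → (t : EReal) < T →
      b t < d t ∧ 0 < ρ t ∧ ρ t < a t := by
  intro t ht htT
  have hlt : ∀ τ ∈ Icc 0 t, (τ : EReal) < T :=
    fun τ hτ => (EReal.coe_le_coe_iff.2 hτ.2).trans_lt htT
  exact comparison_on_Icc (fun τ hτ => hAlb τ hτ.1 (hlt τ hτ)) (fun τ hτ => hd τ hτ.1 (hlt τ hτ))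
    (fun τ hτ => hρ τ hτ.1 (hlt τ hτ)) (fun τ hτ => hb τ hτ.1 (hlt τ hτ))
    (fun τ hτ => ha τ hτ.1 (hlt τ hτ)) ⟨hbd0, hρ0, hρa0⟩ t ⟨ht, le_rfl⟩

/-- Comparison principle (Lemma 4.4 of the paper) between the Euler--Poisson
characteristic system and the auxiliary system with coefficient `−(t+1)^s`. -/
theorem comparison_principle_poly
    (s : ℝ) (hs : 1 ≤ s)
    (T : EReal) (hT : 0 < T)
    (A d ρ b a : ℝ → ℝ)
    (hAcont : ContinuousOn A {t : ℝ | 0 ≤ t ∧ (t : EReal) < T})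
    (hAlb : ∀ t : ℝ, 0 ≤ t → (t : EReal) < T → -(t + 1) ^ s ≤ A t)
    (hd : ∀ t : ℝ, 0 ≤ t → (t : EReal) < T →
      HasDerivAt d (-(d t) ^ 2 / 2 + A t * (ρ t) ^ 2 - ρ t + 1) t)
    (hρ : ∀ t : ℝ, 0 ≤ t → (t : EReal) < T →
      HasDerivAt ρ (-(ρ t) * d t) t)
    (hb : ∀ t : ℝ, 0 ≤ t → (t : EReal) < T →
      HasDerivAt b (-(b t) ^ 2 / 2 - (t + 1) ^ s * (a t) ^ 2 - a t + 1) t)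
    (ha : ∀ t : ℝ, 0 ≤ t → (t : EReal) < T →
      HasDerivAt a (-(b t) * a t) t)
    (hbd0 : b 0 < d 0) (hρ0 : 0 < ρ 0) (hρa0 : ρ 0 < a 0) :
    ∀ t : ℝ, 0 ≤ t → (t : EReal) < T →
      b t < d t ∧ 0 < ρ t ∧ ρ t < a t :=
  comparison_principle_poly_general s T A d ρ b a hAlb hd hρ hb ha hbd0 hρ0 hρa0
end

section
/- Let K > 0, T ∈ (0, ∞], and let A : [0,T) → ℝ satisfy A(t) ≤ K for all t. Let d, ρ : [0,T) → ℝ be differentiable with d' = −d²/2 + A(t)ρ² − ρ + 1 and ρ' = −ρ d on [0,T). If there exists ρ_M > 0 such that 0 < ρ(t) ≤ ρ_M for all t ∈ [0,T), then for all t ∈ [0,T): d(t) ≤ max{ d(0), √(2 · max{1, K ρ_M² − ρ_M + 1}) }. -/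
/-- Lemma 4.5 of the paper: if the density stays bounded, then the divergence
is bounded from above, uniformly in the initial data. -/
theorem divergence_upper_bound
    (K : ℝ) (hK : 0 < K)
    (T : EReal) (hT : 0 < T)
    (A d ρ : ℝ → ℝ)
    (hAub : ∀ t : ℝ, 0 ≤ t → (t : EReal) < T → A t ≤ K)
    (hd : ∀ t : ℝ, 0 ≤ t → (t : EReal) < T →
      HasDerivAt d (-(d t) ^ 2 / 2 + A t * (ρ t) ^ 2 - ρ t + 1) t)
    (hρ : ∀ t : ℝ, 0 ≤ t → (t : EReal) < T →
      HasDerivAt ρ (-(ρ t) * d t) t)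
    (ρM : ℝ) (hρM : 0 < ρM)
    (hρbdd : ∀ t : ℝ, 0 ≤ t → (t : EReal) < T → 0 < ρ t ∧ ρ t ≤ ρM) :
    ∀ t : ℝ, 0 ≤ t → (t : EReal) < T →
      d t ≤ max (d 0) (Real.sqrt (2 * max 1 (K * ρM ^ 2 - ρM + 1))) := by
  set C : ℝ := max 1 (K * ρM ^ 2 - ρM + 1) with hC
  have hC1 : (1 : ℝ) ≤ C := le_max_left _ _
  have hC0 : (0 : ℝ) ≤ 2 * C := by linarith
  set M : ℝ := max (d 0) (Real.sqrt (2 * C)) with hM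
  have hsqM : Real.sqrt (2 * C) ≤ M := le_max_right _ _
  have hsqnn : (0 : ℝ) ≤ Real.sqrt (2 * C) := Real.sqrt_nonneg _
  -- key: at any valid point with d t ≥ M, the derivative of d is ≤ 0
  have key : ∀ t : ℝ, 0 ≤ t → (t : EReal) < T → M ≤ d t →
      -(d t) ^ 2 / 2 + A t * (ρ t) ^ 2 - ρ t + 1 ≤ 0 := by
    intro t ht htT hMd
    obtain ⟨hρpos, hρle⟩ := hρbdd t ht htT
    have hA := hAub t ht htT
    have h1 : A t * (ρ t) ^ 2 ≤ K * (ρ t) ^ 2 :=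
      mul_le_mul_of_nonneg_right hA (sq_nonneg _)
    have h2 : K * (ρ t) ^ 2 - ρ t + 1 ≤ C := by
      rcases le_or_gt (K * ρ t) 1 with h | h
      · have : K * (ρ t) ^ 2 - ρ t ≤ 0 := by nlinarith
        calc K * (ρ t) ^ 2 - ρ t + 1 ≤ 1 := by linarith
          _ ≤ C := hC1
      · have hfac : 0 ≤ (K * (ρ t + ρM) - 1) * (ρM - ρ t) :=
          mul_nonneg (by nlinarith) (by linarith)
        have : K * (ρ t) ^ 2 - ρ t ≤ K * ρM ^ 2 - ρM := by nlinarith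
        calc K * (ρ t) ^ 2 - ρ t + 1 ≤ K * ρM ^ 2 - ρM + 1 := by linarith
          _ ≤ C := le_max_right _ _
    have hdge : Real.sqrt (2 * C) ≤ d t := le_trans hsqM hMd
    have hdsq : 2 * C ≤ (d t) ^ 2 := by
      have := Real.sq_sqrt hC0
      nlinarith [Real.sqrt_nonneg (2 * C)]
    linarith
  intro t₁ ht₁ ht₁T
  by_contra hcon
  push_neg at hcon
  have hd0M : d 0 ≤ M := le_max_left _ _
  have ht₁pos : 0 < t₁ := by
    rcases lt_or_eq_of_le ht₁ with h | h
    · exact h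
    · exfalso; rw [← h] at hcon; exact absurd hd0M (not_le.mpr hcon)
  -- membership lemma for [0, t₁]
  have hmem : ∀ s : ℝ, s ∈ Set.Icc 0 t₁ → 0 ≤ s ∧ (s : EReal) < T := by
    intro s hs
    refine ⟨hs.1, lt_of_le_of_lt ?_ ht₁T⟩
    exact_mod_cast EReal.coe_le_coe_iff.mpr hs.2
  have hcont : ContinuousOn d (Set.Icc 0 t₁) := by
    intro s hs
    obtain ⟨h0, hT'⟩ := hmem s hs
    exact (hd s h0 hT').differentiableAt.continuousAt.continuousWithinAt
  set S : Set ℝ := Set.Icc 0 t₁ ∩ d ⁻¹' Set.Iic M with hS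
  have hSclosed : IsClosed S :=
    hcont.preimage_isClosed_of_isClosed isClosed_Icc isClosed_Iic
  have hSne : S.Nonempty := ⟨0, ⟨le_refl 0, le_of_lt ht₁pos⟩, hd0M⟩
  have hSbdd : BddAbove S := ⟨t₁, fun x hx => hx.1.2⟩
  set s := sSup S with hs
  have hsS : s ∈ S := hSclosed.csSup_mem hSne hSbdd
  have hs0 : 0 ≤ s := hsS.1.1
  have hst₁ : s ≤ t₁ := hsS.1.2
  have hdsM : d s ≤ M := hsS.2
  have hslt : s < t₁ := by
    rcases lt_or_eq_of_le hst₁ with h | h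
    · exact h
    · exfalso; rw [h] at hdsM; exact absurd hdsM (not_le.mpr hcon)
  -- on (s, t₁], d > M
  have hgtM : ∀ x : ℝ, s < x → x ≤ t₁ → M < d x := by
    intro x hsx hxt₁
    by_contra hx
    push_neg at hx
    have : x ∈ S := ⟨⟨le_trans hs0 hsx.le, hxt₁⟩, hx⟩
    exact absurd (le_csSup hSbdd this) (not_le.mpr hsx)
  -- d is antitone on [s, t₁]
  have hanti : AntitoneOn d (Set.Icc s t₁) := by
    apply antitoneOn_of_deriv_nonpos (convex_Icc s t₁)
    · exact hcont.mono (Set.Icc_subset_Icc hs0 le_rfl)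
    · intro x hx
      rw [interior_Icc] at hx
      obtain ⟨h0, hT'⟩ := hmem x ⟨le_trans hs0 hx.1.le, hx.2.le⟩
      exact (hd x h0 hT').differentiableAt.differentiableWithinAt
    · intro x hx
      rw [interior_Icc] at hx
      obtain ⟨h0, hT'⟩ := hmem x ⟨le_trans hs0 hx.1.le, hx.2.le⟩
      rw [(hd x h0 hT').deriv]
      exact key x h0 hT' (hgtM x hx.1 hx.2.le).le
  have : d t₁ ≤ d s :=
    hanti ⟨le_rfl, hslt.le⟩ ⟨hslt.le, le_rfl⟩ hslt.le
  linarith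
end

section
/- Let T ∈ (0, ∞] and let A : [0,T) → ℝ be continuous with A(t) ≥ −e^t for all t. Let d, ρ, b, a : [0,T) → ℝ be differentiable and satisfy d' = −d²/2 + A(t)ρ² − ρ + 1, ρ' = −ρ d, b' = −b²/2 − e^t a² − a + 1, and a' = −b a on [0,T). If b(0) < d(0) and 0 < ρ(0) < a(0), then for all t ∈ [0,T): b(t) < d(t) and 0 < ρ(t) < a(t). -/
/-!
The gaps `d - b` and `a - ρ` satisfy linear differential inequalities `f' ≥ g f` whose
inhomogeneous parts are nonnegative as long as both gaps are (the system is cooperative, and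
`A ≥ -e^t` enters only there). An integrating factor `exp (-∫ g)` makes `f * exp (-∫ g)`
monotone, so neither gap can be the first to vanish; the same integrating factor keeps `ρ`
and `a` positive.
-/

open Set

theorem ContinuousOn.hasDerivAt_integral_of_mem_Ioo {g : ℝ → ℝ} {a b t : ℝ}
    (hg : ContinuousOn g (Icc a b)) (ht : t ∈ Ioo a b) :
    HasDerivAt (fun x => ∫ s in a..x, g s) (g t) t :=
  intervalIntegral.integral_hasDerivAt_right
    ((hg.mono (Icc_subset_Icc le_rfl ht.2.le)).intervalIntegrable_of_Icc ht.1.le)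
    ((hg.mono Ioo_subset_Icc_self).stronglyMeasurableAtFilter isOpen_Ioo t ht)
    (hg.continuousAt (Icc_mem_nhds ht.1 ht.2))

theorem ContinuousOn.continuousOn_integral_Icc {g : ℝ → ℝ} {a b : ℝ} (hab : a ≤ b)
    (hg : ContinuousOn g (Icc a b)) :
    ContinuousOn (fun x => ∫ s in a..x, g s) (Icc a b) := by
  rw [← uIcc_of_le hab] at hg ⊢
  exact intervalIntegral.continuousOn_primitive_interval (hg.integrableOn_compact isCompact_uIcc)

theorem pos_of_pos_of_mul_le_deriv {f f' g : ℝ → ℝ} {a b : ℝ} (hab : a ≤ b)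
    (hg : ContinuousOn g (Icc a b)) (hf : ContinuousOn f (Icc a b))
    (hf' : ∀ t ∈ Ioo a b, HasDerivAt f (f' t) t)
    (hle : ∀ t ∈ Ioo a b, g t * f t ≤ f' t) (ha : 0 < f a) : 0 < f b := by
  set G := fun x => ∫ s in a..x, g s
  have hmono : MonotoneOn (fun t => f t * Real.exp (-G t)) (Icc a b) := by
    refine monotoneOn_of_hasDerivWithinAt_nonneg (convex_Icc a b)
      (f' := fun t => (f' t - g t * f t) * Real.exp (-G t))
      (hf.mul (hg.continuousOn_integral_Icc hab).neg.rexp) (fun t ht => ?_) (fun t ht => ?_)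
    all_goals rw [interior_Icc] at ht
    · have hG : HasDerivAt G (g t) t := hg.hasDerivAt_integral_of_mem_Ioo ht
      exact (((hf' t ht).mul hG.neg.exp).congr_deriv
        (by rw [Pi.neg_apply]; ring)).hasDerivWithinAt
    · exact mul_nonneg (sub_nonneg.2 (hle t ht)) (Real.exp_pos _).le
  have := hmono (left_mem_Icc.2 hab) (right_mem_Icc.2 hab) hab
  simp only [G, intervalIntegral.integral_same, neg_zero, Real.exp_zero, mul_one] at this
  exact pos_of_mul_pos_left (ha.trans_le this) (Real.exp_pos _).le

theorem ContinuousOn.forall_lt_of_forall_Ico_lt {α : Type*} [ConditionallyCompleteLinearOrder α]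
    [TopologicalSpace α] [OrderTopology α] {φ : α → ℝ} {a b : α} {c : ℝ}
    (hφ : ContinuousOn φ (Icc a b))
    (h : ∀ t ∈ Icc a b, (∀ s ∈ Ico a t, c < φ s) → c < φ t) :
    ∀ t ∈ Icc a b, c < φ t := by
  by_contra! ⟨t, ht, htc⟩
  have hK : IsCompact (Icc a b ∩ φ ⁻¹' Iic c) :=
    isCompact_Icc.of_isClosed_subset (hφ.preimage_isClosed_of_isClosed isClosed_Icc isClosed_Iic)
      inter_subset_left
  obtain ⟨m, ⟨hm, hmc⟩, hfirst⟩ := hK.exists_isLeast ⟨t, ht, htc⟩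
  refine (h m hm fun s hs => ?_).not_ge hmc
  by_contra! hsc
  exact (hfirst ⟨⟨hs.1, hs.2.le.trans hm.2⟩, hsc⟩).not_gt hs.2

theorem euler_poisson_comparison_on_Icc {A w d ρ b a : ℝ → ℝ} {t₀ t₁ : ℝ}
    (hAw : ∀ t ∈ Icc t₀ t₁, -w t ≤ A t) (hw : ∀ t ∈ Icc t₀ t₁, 0 ≤ w t)
    (hd : ∀ t ∈ Icc t₀ t₁, HasDerivAt d (-(d t) ^ 2 / 2 + A t * (ρ t) ^ 2 - ρ t + 1) t)
    (hρ : ∀ t ∈ Icc t₀ t₁, HasDerivAt ρ (-(ρ t) * d t) t)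
    (hb : ∀ t ∈ Icc t₀ t₁, HasDerivAt b (-(b t) ^ 2 / 2 - w t * (a t) ^ 2 - a t + 1) t)
    (ha : ∀ t ∈ Icc t₀ t₁, HasDerivAt a (-(b t) * a t) t)
    (hbd₀ : b t₀ < d t₀) (hρ₀ : 0 < ρ t₀) (hρa₀ : ρ t₀ < a t₀) :
    ∀ t ∈ Icc t₀ t₁, b t < d t ∧ 0 < ρ t ∧ ρ t < a t := by
  have hsub {t} (ht : t ∈ Icc t₀ t₁) : Icc t₀ t ⊆ Icc t₀ t₁ := Icc_subset_Icc le_rfl ht.2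
  have pos_of_le_deriv {f f' g : ℝ → ℝ} (hf : ∀ t ∈ Icc t₀ t₁, HasDerivAt f (f' t) t)
      (hg : ContinuousOn g (Icc t₀ t₁)) {t} (ht : t ∈ Icc t₀ t₁)
      (hle : ∀ s ∈ Ioo t₀ t, g s * f s ≤ f' s) (h₀ : 0 < f t₀) : 0 < f t :=
    pos_of_pos_of_mul_le_deriv ht.1 (hg.mono (hsub ht))
      ((HasDerivAt.continuousOn hf).mono (hsub ht))
      (fun s hs => hf s (hsub ht (Ioo_subset_Icc_self hs))) hle h₀
  have hdc := HasDerivAt.continuousOn hd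
  have hbc := HasDerivAt.continuousOn hb
  have hρ_pos : ∀ t ∈ Icc t₀ t₁, 0 < ρ t := fun t ht =>
    pos_of_le_deriv hρ (g := fun s => -d s) hdc.neg ht (fun s _ => le_of_eq (by ring)) hρ₀
  have ha_pos : ∀ t ∈ Icc t₀ t₁, 0 < a t := fun t ht =>
    pos_of_le_deriv ha (g := fun s => -b s) hbc.neg ht (fun s _ => le_of_eq (by ring))
      (hρ₀.trans hρa₀)
  have hgap : ∀ t ∈ Icc t₀ t₁, 0 < min (d t - b t) (a t - ρ t) := by
    refine ContinuousOn.forall_lt_of_forall_Ico_lt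
      ((HasDerivAt.continuousOn fun t ht => (hd t ht).sub (hb t ht)).inf
        (HasDerivAt.continuousOn fun t ht => (ha t ht).sub (hρ t ht)))
      fun t ht hprev => ?_
    have hprev' : ∀ s ∈ Ioo t₀ t, 0 < d s - b s ∧ 0 < a s - ρ s := fun s hs =>
      lt_min_iff.1 (hprev s (Ioo_subset_Ico_self hs))
    refine lt_min ?_ ?_
    · refine pos_of_le_deriv (f := fun s => d s - b s) (g := fun s => -(d s + b s) / 2)
        (fun s hs => (hd s hs).sub (hb s hs)) ((hdc.add hbc).neg.div_const 2) ht (fun s hs => ?_)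
        (sub_pos.2 hbd₀)
      have hs' := hsub ht (Ioo_subset_Icc_self hs)
      -- `(d - b)' + (d + b) / 2 * (d - b) = (A + w) ρ² + w (a - ρ) (a + ρ) + (a - ρ)`
      linear_combination (hprev' s hs).2.le
        + mul_nonneg (neg_le_iff_add_nonneg.1 (hAw s hs')) (sq_nonneg (ρ s))
        + mul_nonneg (hw s hs') (mul_nonneg (hprev' s hs).2.le
          (add_pos (ha_pos s hs') (hρ_pos s hs')).le)
    · refine pos_of_le_deriv (f := fun s => a s - ρ s) (g := fun s => -d s)
        (fun s hs => (ha s hs).sub (hρ s hs)) hdc.neg ht (fun s hs => ?_) (sub_pos.2 hρa₀)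
      linear_combination mul_nonneg (ha_pos s (hsub ht (Ioo_subset_Icc_self hs))).le
        (hprev' s hs).1.le
  intro t ht
  obtain ⟨hP, hQ⟩ := lt_min_iff.1 (hgap t ht)
  exact ⟨sub_pos.1 hP, hρ_pos t ht, sub_pos.1 hQ⟩

theorem comparison_principle_exp_general
    (T : EReal)
    (A d ρ b a : ℝ → ℝ)
    (hAlb : ∀ t : ℝ, 0 ≤ t → (t : EReal) < T → -Real.exp t ≤ A t)
    (hd : ∀ t : ℝ, 0 ≤ t → (t : EReal) < T →
      HasDerivAt d (-(d t) ^ 2 / 2 + A t * (ρ t) ^ 2 - ρ t + 1) t)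
    (hρ : ∀ t : ℝ, 0 ≤ t → (t : EReal) < T →
      HasDerivAt ρ (-(ρ t) * d t) t)
    (hb : ∀ t : ℝ, 0 ≤ t → (t : EReal) < T →
      HasDerivAt b (-(b t) ^ 2 / 2 - Real.exp t * (a t) ^ 2 - a t + 1) t)
    (ha : ∀ t : ℝ, 0 ≤ t → (t : EReal) < T →
      HasDerivAt a (-(b t) * a t) t)
    (hbd0 : b 0 < d 0) (hρ0 : 0 < ρ 0) (hρa0 : ρ 0 < a 0) :
    ∀ t : ℝ, 0 ≤ t → (t : EReal) < T →
      b t < d t ∧ 0 < ρ t ∧ ρ t < a t := by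
  intro u hu₀ huT
  have hlt : ∀ t ∈ Icc 0 u, (t : EReal) < T := fun t ht =>
    (EReal.coe_le_coe_iff.2 ht.2).trans_lt huT
  exact euler_poisson_comparison_on_Icc (w := Real.exp) (fun t ht => hAlb t ht.1 (hlt t ht))
    (fun t _ => (Real.exp_pos t).le) (fun t ht => hd t ht.1 (hlt t ht))
    (fun t ht => hρ t ht.1 (hlt t ht)) (fun t ht => hb t ht.1 (hlt t ht))
    (fun t ht => ha t ht.1 (hlt t ht)) hbd0 hρ0 hρa0 u ⟨hu₀, le_rfl⟩

/-- Comparison principle between the Euler--Poisson characteristic system and the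
auxiliary system with coefficient `−e^t` (exponential case). -/
theorem comparison_principle_exp
    (T : EReal) (hT : 0 < T)
    (A d ρ b a : ℝ → ℝ)
    (hAcont : ContinuousOn A {t : ℝ | 0 ≤ t ∧ (t : EReal) < T})
    (hAlb : ∀ t : ℝ, 0 ≤ t → (t : EReal) < T → -Real.exp t ≤ A t)
    (hd : ∀ t : ℝ, 0 ≤ t → (t : EReal) < T →
      HasDerivAt d (-(d t) ^ 2 / 2 + A t * (ρ t) ^ 2 - ρ t + 1) t)
    (hρ : ∀ t : ℝ, 0 ≤ t → (t : EReal) < T →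
      HasDerivAt ρ (-(ρ t) * d t) t)
    (hb : ∀ t : ℝ, 0 ≤ t → (t : EReal) < T →
      HasDerivAt b (-(b t) ^ 2 / 2 - Real.exp t * (a t) ^ 2 - a t + 1) t)
    (ha : ∀ t : ℝ, 0 ≤ t → (t : EReal) < T →
      HasDerivAt a (-(b t) * a t) t)
    (hbd0 : b 0 < d 0) (hρ0 : 0 < ρ 0) (hρa0 : ρ 0 < a 0) :
    ∀ t : ℝ, 0 ≤ t → (t : EReal) < T →
      b t < d t ∧ 0 < ρ t ∧ ρ t < a t :=
  comparison_principle_exp_general T A d ρ b a hAlb hd hρ hb ha hbd0 hρ0 hρa0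
end
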